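/- arXiv:2305.06904 — 6 statements merged into one kernel-verified Lean document; each statement's English description precedes it below -/
import Mathlib

section
/- For every n ≥ 0, the unit map k → Ω_n is a quasi-isomorphism, where Ω_n = k[t_0,…,t_n, dt_0,…,dt_n]/(t_0+…+t_n−1, dt_0+…+dt_n) is the commutative dg algebra of polynomial differential forms on the n-simplex over a field k of characteristic zero. Equivalently, H^0(Ω_n) = k and H^i(Ω_n) = 0 for i ≠ 0. -/
open scoped BigOperators

variable (K : Type) [Field K]

/-- The space `Ω_n^m` of polynomial differential `m`-forms on the `n`-simplex,
in the reduced coordinates `t_1, …, t_n` (with `t_0 = 1 - t_1 - ⋯ - t_n`):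
a form `∑_S p_S · dt_S` is the function sending an `m`-element subset
`S = {i_1 < ⋯ < i_m} ⊆ {1,…,n}` to the polynomial coefficient of
`dt_{i_1} ∧ ⋯ ∧ dt_{i_m}`.  This is (a model of) the quotient
`K[t_0,…,t_n,dt_0,…,dt_n]/(t_0+⋯+t_n-1, dt_0+⋯+dt_n)`. -/
def Form (n m : ℕ) : Type :=
  {s : Finset (Fin n) // s.card = m} → MvPolynomial (Fin n) K

noncomputable instance (n m : ℕ) : AddCommGroup (Form K n m) := by unfold Form; infer_instance
noncomputable instance (n m : ℕ) : Module K (Form K n m) := by unfold Form; infer_instance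

/-- The de Rham differential `d : Ω_n^m → Ω_n^{m+1}`,
`d (p · dt_S) = ∑_i (∂p/∂t_i) dt_i ∧ dt_S`. -/
noncomputable def dForm {n m : ℕ} (f : Form K n m) : Form K n (m + 1) := fun s =>
  ∑ i ∈ s.1.attach,
    ((-1 : K) ^ ((s.1.filter (fun j => j < i.1)).card)) •
      MvPolynomial.pderiv i.1
        (f ⟨s.1.erase i.1, by
          rw [Finset.card_erase_of_mem i.2, s.2]; rfl⟩)

/-- The constant form `c ∈ Ω_n^0`. -/
noncomputable def constForm (n : ℕ) (c : K) : Form K n 0 := fun _ => MvPolynomial.C c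

/-!
In the coordinates `t_1, …, t_n`, `Ω_n` is the polynomial de Rham complex of affine `n`-space.
Contraction `ι_E` with the Euler field `E = ∑ t_i ∂/∂t_i` is a contracting homotopy: by Cartan's
formula `d ι_E + ι_E d = L_E`, and `L_E` multiplies `p dt_S` by `e + m` when `p` is homogeneous of
degree `e` and `#S = m`. In characteristic zero `L_E` is invertible on forms of positive degree, and
its inverse commutes with `d`, so a closed `ω` is `d (ι_E (L_E⁻¹ ω))`. A closed `0`-form has all its
partial derivatives zero, hence is constant.
-/

namespace MvPolynomial

variable {σ R 𝕜 : Type*}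

theorem coeff_sum_X_mul_pderiv [CommSemiring R] [Fintype σ] (p : MvPolynomial σ R)
    (d : σ →₀ ℕ) : coeff d (∑ i, X i * pderiv i p) = d.degree * coeff d p := by
  induction p using MvPolynomial.induction_on' with
  | add p q hp hq => simp only [map_add, mul_add, Finset.sum_add_distrib, coeff_add, hp, hq]
  | monomial e a =>
    classical
    simp only [X_mul_pderiv_monomial]
    rw [← Finset.sum_smul, ← Finsupp.degree_eq_sum, coeff_smul, coeff_monomial]
    split_ifs with h
    · rw [h, nsmul_eq_mul]
    · rw [smul_zero, mul_zero]

theorem eq_C_of_pderiv_eq_zero [CommSemiring R] [NoZeroDivisors R] [CharZero R]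
    {p : MvPolynomial σ R} (hp : ∀ i, pderiv i p = 0) : p = C (coeff 0 p) := by
  classical
  ext d
  rw [coeff_C]
  split_ifs with hd
  · rw [hd]
  obtain ⟨i, hi⟩ : ∃ i, d i ≠ 0 := by
    by_contra! h
    exact hd (Finsupp.ext fun j => (h j).symm)
  have hsplit : d - Finsupp.single i 1 + Finsupp.single i 1 = d :=
    tsub_add_cancel_of_le (Finsupp.single_le_iff.mpr (Nat.one_le_iff_ne_zero.mpr hi))
  have h := coeff_pderiv (i := i) p (d - Finsupp.single i 1)
  rw [hp i, coeff_zero, hsplit] at h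
  exact (mul_eq_zero.1 h.symm).resolve_right (Nat.cast_add_one_ne_zero _)

/-- The Lie derivative along the Euler field `E = ∑ i, X i • ∂/∂X i`, acting on the coefficient `p`
of `p dt_S` with `#S = m`. -/
noncomputable def eulerShift [CommSemiring R] [Fintype σ] (m : ℕ) (p : MvPolynomial σ R) :
    MvPolynomial σ R :=
  m • p + ∑ i, X i * pderiv i p

theorem coeff_eulerShift [CommSemiring R] [Fintype σ] (m : ℕ) (p : MvPolynomial σ R)
    (d : σ →₀ ℕ) : coeff d (eulerShift m p) = (d.degree + m : ℕ) * coeff d p := by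
  rw [eulerShift, coeff_add, coeff_sum_X_mul_pderiv, coeff_smul, nsmul_eq_mul, ← add_mul,
    Nat.cast_add, add_comm]

variable [Field 𝕜]

noncomputable def eulerShiftInv (m : ℕ) : MvPolynomial σ 𝕜 →ₗ[𝕜] MvPolynomial σ 𝕜 :=
  Finsupp.lsum 𝕜 (fun d : σ →₀ ℕ =>
    (((d.degree + m : ℕ) : 𝕜)⁻¹) • (monomial d : 𝕜 →ₗ[𝕜] MvPolynomial σ 𝕜))
    ∘ₗ (AddMonoidAlgebra.coeffLinearEquiv 𝕜).toLinearMap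

theorem coeff_eulerShiftInv (m : ℕ) (p : MvPolynomial σ 𝕜) (d : σ →₀ ℕ) :
    coeff d (eulerShiftInv m p) = ((d.degree + m : ℕ) : 𝕜)⁻¹ * coeff d p := by
  classical
  simp only [eulerShiftInv, LinearMap.coe_comp, Finsupp.coe_lsum, Finsupp.sum,
    LinearMap.smul_apply, LinearEquiv.coe_coe, Function.comp_apply,
    AddMonoidAlgebra.coeffLinearEquiv_apply, coeff_sum, coeff_smul, coeff_monomial, smul_eq_mul,
    mul_ite, mul_zero, Finset.sum_ite_eq', Finsupp.mem_support_iff, ne_eq, ite_not]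
  split_ifs with h
  · rw [show coeff d p = 0 from h, mul_zero]
  · rfl

theorem pderiv_eulerShiftInv (m : ℕ) (i : σ) (p : MvPolynomial σ 𝕜) :
    pderiv i (eulerShiftInv m p) = eulerShiftInv (m + 1) (pderiv i p) := by
  classical
  ext d
  rw [coeff_pderiv, coeff_eulerShiftInv, coeff_eulerShiftInv, coeff_pderiv, map_add,
    Finsupp.degree_single]
  push_cast
  ring

theorem eulerShift_eulerShiftInv [CharZero 𝕜] [Fintype σ] (m : ℕ) (p : MvPolynomial σ 𝕜) :
    eulerShift (m + 1) (eulerShiftInv (m + 1) p) = p := by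
  ext d
  rw [coeff_eulerShift, coeff_eulerShiftInv, ← mul_assoc,
    mul_inv_cancel₀ (Nat.cast_ne_zero.2 (Nat.succ_ne_zero _)), one_mul]

end MvPolynomial

open MvPolynomial Finset

noncomputable def formCoeff {n m : ℕ} (ω : Form K n m) (t : Finset (Fin n)) :
    MvPolynomial (Fin n) K :=
  if h : #t = m then ω ⟨t, h⟩ else 0

theorem formCoeff_of_card_eq {n m : ℕ} (ω : Form K n m) {t : Finset (Fin n)} (h : #t = m) :
    formCoeff K ω t = ω ⟨t, h⟩ :=
  dif_pos h

/-- `dt_i ∧ dt_s = insertSign s i • dt_{insert i s}` for `i ∉ s`. -/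
noncomputable def insertSign {n : ℕ} (s : Finset (Fin n)) (i : Fin n) : K :=
  (-1 : K) ^ #(s.filter (· < i))

theorem insertSign_mul_self {n : ℕ} (s : Finset (Fin n)) (i : Fin n) :
    insertSign K s i * insertSign K s i = 1 := by
  rw [insertSign, ← mul_pow, neg_one_mul, neg_neg, one_pow]

theorem insertSign_insert_of_lt {n : ℕ} {s : Finset (Fin n)} {i j : Fin n} (hj : j ∉ s)
    (h : j < i) : insertSign K (insert j s) i = -insertSign K s i := by
  have hj' : j ∉ s.filter (· < i) := fun hmem => hj (mem_filter.1 hmem).1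
  rw [insertSign, filter_insert, if_pos h, card_insert_of_notMem hj', pow_succ, mul_neg_one,
    insertSign]

theorem insertSign_insert_of_not_lt {n : ℕ} (s : Finset (Fin n)) {i j : Fin n} (h : ¬j < i) :
    insertSign K (insert j s) i = insertSign K s i := by
  rw [insertSign, filter_insert, if_neg h, insertSign]

theorem insertSign_erase_of_lt {n : ℕ} {s : Finset (Fin n)} {i j : Fin n} (hi : i ∈ s)
    (h : i < j) : insertSign K (s.erase i) j = -insertSign K s j := by
  conv_rhs => rw [← insert_erase hi, insertSign_insert_of_lt K (notMem_erase i s) h, neg_neg]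

theorem insertSign_erase_of_not_lt {n : ℕ} (s : Finset (Fin n)) {i j : Fin n} (h : ¬i < j) :
    insertSign K (s.erase i) j = insertSign K s j := by
  by_cases hi : i ∈ s
  · conv_rhs => rw [← insert_erase hi, insertSign_insert_of_not_lt K _ h]
  · rw [erase_eq_of_notMem hi]

/-- The anticommutation `dt_i ∧ dt_j = -dt_j ∧ dt_i`. -/
theorem insertSign_mul_insertSign_insert {n : ℕ} {s : Finset (Fin n)} {i j : Fin n} (hi : i ∈ s)
    (hj : j ∉ s) : insertSign K s j * insertSign K (insert j s) i =
      -(insertSign K s i * insertSign K (s.erase i) j) := by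
  rcases lt_or_gt_of_ne (ne_of_mem_of_not_mem hi hj) with hij | hji
  · rw [insertSign_insert_of_not_lt K s hij.not_gt, insertSign_erase_of_lt K hi hij]
    ring
  · rw [insertSign_insert_of_lt K hj hji, insertSign_erase_of_not_lt K s hji.not_gt]
    ring

/-- The contraction `ι_E` with the Euler field `E = ∑ j, t_j ∂/∂t_j`. -/
noncomputable def eulerContract {n m : ℕ} (ω : Form K n (m + 1)) : Form K n m := fun s =>
  ∑ j ∈ s.1ᶜ, insertSign K s.1 j • (X j * formCoeff K ω (insert j s.1))

theorem formCoeff_zero {n m : ℕ} (t : Finset (Fin n)) : formCoeff K (0 : Form K n m) t = 0 := by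
  rw [formCoeff]
  split_ifs <;> rfl

theorem eulerContract_zero_apply {n m : ℕ} (s : {s : Finset (Fin n) // #s = m}) :
    eulerContract K (0 : Form K n (m + 1)) s = 0 := by
  simp only [eulerContract, formCoeff_zero, mul_zero, smul_zero, sum_const_zero]

theorem dForm_apply {n m : ℕ} (ω : Form K n m) (S : Finset (Fin n)) (hS : #S = m + 1) :
    dForm K ω ⟨S, hS⟩ = ∑ i ∈ S, insertSign K S i • pderiv i (formCoeff K ω (S.erase i)) := by
  rw [← sum_attach S]
  refine sum_congr rfl fun i _ => ?_
  rw [formCoeff_of_card_eq]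
  rfl

theorem dForm_eulerContract_apply {n m : ℕ} (ω : Form K n (m + 1)) (S : Finset (Fin n))
    (hS : #S = m + 1) :
    dForm K (eulerContract K ω) ⟨S, hS⟩ =
      ∑ i ∈ S, (ω ⟨S, hS⟩ + X i * pderiv i (ω ⟨S, hS⟩)) +
      ∑ i ∈ S, ∑ j ∈ Sᶜ, (insertSign K S i * insertSign K (S.erase i) j) •
        (X j * pderiv i (formCoeff K ω (insert j (S.erase i)))) := by
  rw [dForm_apply, ← sum_add_distrib]
  refine sum_congr rfl fun i hi => ?_
  have hc : #(S.erase i) = m := by rw [card_erase_of_mem hi, hS]; rfl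
  simp only [formCoeff_of_card_eq K _ hc, eulerContract]
  rw [compl_erase, sum_insert (notMem_compl.2 hi), insert_erase hi, formCoeff_of_card_eq K ω hS,
    insertSign_erase_of_not_lt K S (lt_irrefl i), map_add, smul_add, Derivation.map_smul, smul_smul,
    insertSign_mul_self, one_smul, pderiv_mul, pderiv_X_self, one_mul, map_sum, smul_sum]
  congr 1
  refine sum_congr rfl fun j hj => ?_
  rw [Derivation.map_smul, smul_smul, pderiv_mul,
    pderiv_X_of_ne (ne_of_mem_of_not_mem hi (mem_compl.1 hj)).symm, zero_mul, zero_add]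

theorem eulerContract_dForm_apply {n m : ℕ} (ω : Form K n (m + 1)) (S : Finset (Fin n))
    (hS : #S = m + 1) :
    eulerContract K (dForm K ω) ⟨S, hS⟩ =
      ∑ j ∈ Sᶜ, X j * pderiv j (ω ⟨S, hS⟩) +
      ∑ j ∈ Sᶜ, ∑ i ∈ S, (insertSign K S j * insertSign K (insert j S) i) •
        (X j * pderiv i (formCoeff K ω ((insert j S).erase i))) := by
  rw [eulerContract, ← sum_add_distrib]
  refine sum_congr rfl fun j hj => ?_
  have hjS : j ∉ S := mem_compl.1 hj
  have hc : #(insert j S) = m + 1 + 1 := by rw [card_insert_of_notMem hjS, hS]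
  rw [formCoeff_of_card_eq K _ hc, dForm_apply, sum_insert hjS, erase_insert hjS,
    insertSign_insert_of_not_lt K S (lt_irrefl j), formCoeff_of_card_eq K ω hS, mul_add,
    smul_add, mul_smul_comm, smul_smul, insertSign_mul_self, one_smul, mul_sum, smul_sum]
  simp only [mul_smul_comm, smul_smul]

/-- Cartan's formula `d ι_E + ι_E d = L_E`. -/
theorem dForm_eulerContract_add_eulerContract_dForm {n m : ℕ} (ω : Form K n (m + 1))
    (s : {s : Finset (Fin n) // #s = m + 1}) :
    dForm K (eulerContract K ω) s + eulerContract K (dForm K ω) s =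
      eulerShift (m + 1) (ω s) := by
  obtain ⟨S, hS⟩ := s
  have hcross : ∑ i ∈ S, ∑ j ∈ Sᶜ, (insertSign K S i * insertSign K (S.erase i) j) •
        (X j * pderiv i (formCoeff K ω (insert j (S.erase i)))) +
      ∑ j ∈ Sᶜ, ∑ i ∈ S, (insertSign K S j * insertSign K (insert j S) i) •
        (X j * pderiv i (formCoeff K ω ((insert j S).erase i))) = 0 := by
    rw [sum_comm (s := Sᶜ), ← sum_add_distrib]
    refine sum_eq_zero fun i hi => ?_
    rw [← sum_add_distrib]
    refine sum_eq_zero fun j hj => ?_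
    rw [erase_insert_of_ne (ne_of_mem_of_not_mem hi (mem_compl.1 hj)).symm,
      insertSign_mul_insertSign_insert K hi (mem_compl.1 hj), neg_smul, add_neg_cancel]
  rw [dForm_eulerContract_apply, eulerContract_dForm_apply, add_add_add_comm, hcross, add_zero,
    sum_add_distrib, sum_const, hS, add_assoc, sum_add_sum_compl, eulerShift]

theorem dForm_map {n m : ℕ} (f g : MvPolynomial (Fin n) K →ₗ[K] MvPolynomial (Fin n) K)
    (hfg : ∀ i p, pderiv i (f p) = g (pderiv i p)) (ω : Form K n m) :
    dForm K (fun s => f (ω s) : Form K n m) = fun s => g (dForm K ω s) := by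
  funext ⟨S, hS⟩
  have hcoeff : ∀ t, formCoeff K (fun s => f (ω s) : Form K n m) t = f (formCoeff K ω t) := by
    intro t
    unfold formCoeff
    split_ifs
    · rfl
    · exact (map_zero f).symm
  rw [dForm_apply K (fun s => f (ω s) : Form K n m), dForm_apply, map_sum]
  simp only [hcoeff, hfg, map_smul]

theorem exists_dForm_eq_of_dForm_eq_zero [CharZero K] {n m : ℕ} {ω : Form K n (m + 1)}
    (hω : dForm K ω = 0) : ∃ η : Form K n m, dForm K η = ω := by
  let ψ : Form K n (m + 1) := fun s => eulerShiftInv (m + 1) (ω s)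
  have hψ : dForm K ψ = 0 := by
    rw [dForm_map K _ _ (pderiv_eulerShiftInv (m + 1)), hω]
    funext s
    exact map_zero _
  refine ⟨eulerContract K ψ, funext fun s => ?_⟩
  have hcartan := dForm_eulerContract_add_eulerContract_dForm K ψ s
  rw [hψ, eulerContract_zero_apply, add_zero] at hcartan
  rw [hcartan]
  exact eulerShift_eulerShiftInv m (ω s)

theorem dForm_apply_singleton {n : ℕ} (f : Form K n 0) (i : Fin n) :
    dForm K f ⟨{i}, card_singleton i⟩ = pderiv i (f ⟨∅, card_empty⟩) := by
  rw [dForm_apply, sum_singleton, erase_singleton, formCoeff_of_card_eq K f card_empty,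
    insertSign, filter_singleton, if_neg (lt_irrefl i), card_empty, pow_zero, one_smul]

theorem eq_constForm_of_dForm_eq_zero [CharZero K] {n : ℕ} {f : Form K n 0}
    (hf : dForm K f = 0) : ∃ c : K, f = constForm K n c := by
  refine ⟨coeff 0 (f ⟨∅, card_empty⟩), funext fun ⟨S, hS⟩ => ?_⟩
  obtain rfl := card_eq_zero.1 hS
  exact eq_C_of_pderiv_eq_zero fun i => (dForm_apply_singleton K f i).symm.trans (congrFun hf _)

theorem constForm_injective (n : ℕ) : Function.Injective (constForm K n) :=
  fun _ _ h => C_injective (Fin n) K (congrFun h ⟨∅, card_empty⟩)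

theorem dForm_constForm (n : ℕ) (c : K) : dForm K (constForm K n c) = 0 := by
  funext ⟨S, hS⟩
  rw [dForm_apply]
  refine sum_eq_zero fun i _ => ?_
  rw [formCoeff]
  split_ifs
  · rw [constForm, pderiv_C, smul_zero]
  · rw [map_zero, smul_zero]

theorem unit_to_polynomial_forms_quasiIso [CharZero K] (n : ℕ) :
    -- the unit map is injective and closed
    (Function.Injective fun c : K => constForm K n c) ∧
    (∀ c : K, dForm K (constForm K n c) = 0) ∧
    -- `H^0(Ω_n) = K`: closed `0`-forms are exactly the constants
    (∀ f : Form K n 0, dForm K f = 0 → ∃ c : K, f = constForm K n c) ∧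
    -- `H^m(Ω_n) = 0` for `m ≠ 0`: closed positive-degree forms are exact
    (∀ (m : ℕ) (ω : Form K n (m + 1)), dForm K ω = 0 →
      ∃ η : Form K n m, dForm K η = ω) :=
  ⟨constForm_injective K n, dForm_constForm K n, fun _ => eq_constForm_of_dForm_eq_zero K,
    fun _ _ => exists_dForm_eq_of_dForm_eq_zero K⟩
end

section
/- If p : X → Y and q : Y → Z are maps of simplicial sets such that p is a surjective Kan fibration and q∘p is a Kan fibration, then q is a Kan fibration. -/
open CategoryTheory SSet

/-- A map of simplicial sets is a *Kan fibration* if it has the right lifting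
property with respect to all horn inclusions `Λ[n, i] ⟶ Δ[n]` (`n ≥ 1`). -/
def IsKanFibration {X Y : SSet} (f : X ⟶ Y) : Prop :=
  ∀ (n : ℕ) (i : Fin (n + 2)), HasLiftingProperty (horn (n + 1) i).ι f

/-!
For `T ⊆ [n]` let `∂_T Δ[n]` be the union of the facets `d_j Δ[n]`, `j ∈ T`; thus
`∂_∅ Δ[n] = ∅` and `∂_{{i}ᶜ} Δ[n] = Λ[n, i]`. Let `p` be a surjective Kan fibration.
By induction on `n`, `p` has the right lifting property against `∂_T Δ[n] ⟶ Δ[n]`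
whenever `T ≠ [n]`, and against `∂_S Δ[n] ⟶ ∂_T Δ[n]` whenever `S ⊆ T ≠ [n]`:
* adding a facet `d_j` to `∂_T Δ[n + 1]` is a pushout of `∂_{T'} Δ[n] ⟶ Δ[n]`, where
  `T' = δ_j⁻¹ T ≠ [n]`;
* for `n = 0` the only such inclusion is `∅ ⟶ Δ[0]`, and lifting against it is surjectivity;
* for `n > 0` and `k ∉ T`, the inclusion factors as `∂_T Δ[n] ⟶ Λ[n, k] ⟶ Δ[n]`.
Taking `S = ∅` and `T = {i}ᶜ`, every map `Λ[n, i] ⟶ Y` lifts to `X`. So a lifting problem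
for `q` against a horn can first be lifted along `p`, and then solved because `p ≫ q` is a
Kan fibration.
-/

open Simplicial

universe u

namespace CategoryTheory.HasLiftingProperty

lemma exists_lift_of_isInitial {C : Type*} [Category C] {A B X Y : C} (hA : Limits.IsInitial A)
    (i : A ⟶ B) (p : X ⟶ Y) [HasLiftingProperty i p] (f : B ⟶ Y) : ∃ f', f' ≫ p = f :=
  have sq : CommSq (hA.to X) i p f := ⟨hA.hom_ext _ _⟩
  ⟨sq.lift, sq.fac_right⟩

lemma of_comp_of_exists_lift {C : Type*} [Category C] {A B X Y Z : C} (i : A ⟶ B)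
    (p : X ⟶ Y) (q : Y ⟶ Z) [HasLiftingProperty i (p ≫ q)]
    (hlift : ∀ f : A ⟶ Y, ∃ f', f' ≫ p = f) :
    HasLiftingProperty i q where
  sq_hasLift {f g} sq := by
    obtain ⟨f', rfl⟩ := hlift f
    have sq' : CommSq f' i (p ≫ q) g := ⟨by rw [← Category.assoc, sq.w]⟩
    exact ⟨⟨{ l := sq'.lift ≫ p
              fac_left := by rw [← Category.assoc, sq'.fac_left]
              fac_right := by rw [Category.assoc, sq'.fac_right] }⟩⟩

end CategoryTheory.HasLiftingProperty

namespace SSet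

namespace stdSimplex

def facetUnion (n : ℕ) (T : Finset (Fin (n + 1))) : (Δ[n] : SSet.{u}).Subcomplex :=
  ⨆ j ∈ T, face {j}ᶜ

lemma mem_facetUnion_iff {n d : ℕ} (T : Finset (Fin (n + 1))) (x : (Δ[n] : SSet.{u}) _⦋d⦌) :
    x ∈ (facetUnion n T).obj _ ↔ ∃ j ∈ T, j ∉ Set.range x := by
  simp [facetUnion]

lemma facetUnion_compl_singleton (n : ℕ) (i : Fin (n + 1)) :
    facetUnion.{u} n {i}ᶜ = Λ[n, i] := by
  ext ⟨m⟩ x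
  induction m using SimplexCategory.rec
  simp [mem_facetUnion_iff, mem_horn_iff_notMem_range]

lemma facetUnion_empty (n : ℕ) : facetUnion.{u} n ∅ = ⊥ := by
  simp [facetUnion]

lemma facetUnion_insert (n : ℕ) (T : Finset (Fin (n + 1))) (j : Fin (n + 1)) :
    facetUnion.{u} n (insert j T) = facetUnion n T ⊔ face {j}ᶜ := by
  rw [facetUnion, facetUnion, Finset.iSup_insert, sup_comm]

lemma facetUnion_mono (n : ℕ) : Monotone (facetUnion.{u} n) :=
  fun _ _ h ↦ biSup_mono h

lemma preimage_facetUnion_δ {n : ℕ} {T : Finset (Fin (n + 2))} {j : Fin (n + 2)} (hj : j ∉ T) :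
    (facetUnion.{u} (n + 1) T).preimage (stdSimplex.δ j) =
      facetUnion n (T.preimage j.succAbove Fin.succAbove_right_injective.injOn) := by
  ext ⟨m⟩ x
  induction m using SimplexCategory.rec
  have hδ : ∀ k, ((stdSimplex.δ j).app _ x : (Δ[n + 1] : SSet.{u}) _⦋_⦌) k =
      j.succAbove (x k) := fun _ ↦ rfl
  simp only [Subcomplex.preimage_obj, Set.mem_preimage, mem_facetUnion_iff, Finset.mem_preimage,
    Set.mem_range, not_exists, hδ]
  constructor
  · rintro ⟨t, ht, hx⟩
    obtain ⟨s, rfl⟩ := Fin.exists_succAbove_eq (ne_of_mem_of_not_mem ht hj)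
    exact ⟨s, ht, fun k hk ↦ hx k (by rw [hk])⟩
  · rintro ⟨s, hs, hx⟩
    exact ⟨_, hs, fun k hk ↦ hx k (Fin.succAbove_right_injective hk)⟩

end stdSimplex

namespace Subcomplex

def preimageArrowIsoInf {X X' : SSet.{u}} {F : X.Subcomplex} (e : X' ≅ (F : SSet.{u}))
    (A : X.Subcomplex) :
    Arrow.mk (A.preimage (e.hom ≫ F.ι)).ι ≅
      Arrow.mk (homOfLE (inf_le_right : A ⊓ F ≤ F)) :=
  have hrange : range ((A.preimage (e.hom ≫ F.ι)).ι ≫ e.hom ≫ F.ι) ≤ A ⊓ F := fun m ↦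
    Set.range_subset_iff.2 fun x ↦ ⟨x.2, (e.hom.app m x).2⟩
  have hrange' :
      range (homOfLE (inf_le_right : A ⊓ F ≤ F) ≫ e.inv) ≤ A.preimage (e.hom ≫ F.ι) :=
    fun m ↦ Set.range_subset_iff.2 fun y ↦ by
      have h := ConcreteCategory.congr_hom (e.inv_hom_id_app m) ((homOfLE inf_le_right).app m y)
      simp only [Subcomplex.preimage_obj, Set.mem_preimage]
      convert y.2.1
      exact congr_arg Subtype.val h
  have hφ : lift _ hrange ≫ homOfLE inf_le_right = (A.preimage _).ι ≫ e.hom := by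
    rw [← cancel_mono F.ι]; rfl
  Arrow.isoMk
    { hom := lift _ hrange
      inv := lift _ hrange'
      hom_inv_id := by
        rw [← cancel_mono (Subcomplex.ι _), Category.assoc, Subcomplex.lift_ι,
          reassoc_of% hφ, e.hom_inv_id, Category.comp_id, Category.id_comp]
      inv_hom_id := by
        rw [← cancel_mono (Subcomplex.ι _), Category.assoc, Subcomplex.lift_ι,
          Subcomplex.lift_ι_assoc, Category.assoc, e.inv_hom_id_assoc, Category.id_comp]
        rfl }
    e hφ

end Subcomplex

open SSet.stdSimplex

section

variable {X Y : SSet.{u}} (p : X ⟶ Y)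

lemma hasLiftingProperty_bot_ι (hsurj : ∀ m, Function.Surjective (p.app m)) (n : ℕ) :
    HasLiftingProperty (⊥ : (Δ[n] : SSet.{u}).Subcomplex).ι p where
  sq_hasLift {_ g} _ := by
    obtain ⟨x, hx⟩ := hsurj _ (yonedaEquiv g)
    exact ⟨⟨{ l := yonedaEquiv.symm x
              fac_left := Subsingleton.elim _ _
              fac_right := yonedaEquiv.injective (by
                rwa [yonedaEquiv_comp, Equiv.apply_symm_apply]) }⟩⟩

lemma hasLiftingProperty_facetUnion_insert {n : ℕ} {T : Finset (Fin (n + 2))} {j : Fin (n + 2)}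
    (hj : j ∉ T)
    (h : HasLiftingProperty
      (facetUnion n (T.preimage j.succAbove Fin.succAbove_right_injective.injOn)).ι p) :
    HasLiftingProperty (Subcomplex.homOfLE (facetUnion_mono (n + 1) (T.subset_insert j))) p := by
  have sq : Subcomplex.BicartSq (facetUnion (n + 1) T ⊓ face {j}ᶜ)
      (facetUnion (n + 1) T) (face {j}ᶜ) (facetUnion (n + 1) (insert j T)) :=
    ⟨(facetUnion_insert _ _ _).symm, rfl⟩
  have : HasLiftingProperty ((facetUnion (n + 1) T).preimage
      ((faceSingletonComplIso j).hom ≫ (face {j}ᶜ).ι)).ι p := by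
    rwa [faceSingletonComplIso_hom_ι, preimage_facetUnion_δ hj]
  have := HasLiftingProperty.of_arrow_iso_left
    (Subcomplex.preimageArrowIsoInf (faceSingletonComplIso j) (facetUnion (n + 1) T)) p
  exact sq.isPushout.hasLiftingProperty p

lemma hasLiftingProperty_facetUnion_homOfLE {n : ℕ}
    (hA : ∀ T : Finset (Fin (n + 1)), T ≠ .univ → HasLiftingProperty (facetUnion n T).ι p)
    {S T : Finset (Fin (n + 2))} (hST : S ⊆ T) (hT : T ≠ .univ) :
    HasLiftingProperty (Subcomplex.homOfLE (facetUnion_mono _ hST)) p := by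
  induction hc : (T \ S).card generalizing S with
  | zero =>
    obtain rfl : S = T := hST.antisymm (by simpa using hc)
    exact (inferInstance : HasLiftingProperty (𝟙 (facetUnion (n + 1) S : SSet)) p)
  | succ m ih =>
    obtain ⟨j, hj⟩ : (T \ S).Nonempty := by simp [← Finset.card_pos, hc]
    rw [Finset.mem_sdiff] at hj
    obtain ⟨k, hkT⟩ : ∃ k, k ∉ T := by simpa [Finset.eq_univ_iff_forall] using hT
    obtain ⟨s, rfl⟩ := Fin.exists_succAbove_eq (ne_of_mem_of_not_mem hj.1 hkT).symm
    have h₁ := hasLiftingProperty_facetUnion_insert p hj.2 (hA _ fun h ↦ hkT (hST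
      (Finset.mem_preimage.1 (h ▸ Finset.mem_univ s))))
    have h₂ := ih (Finset.insert_subset hj.1 hST) (by
      rw [Finset.sdiff_insert, Finset.card_erase_of_mem (by simp [hj]), hc]; rfl)
    rw [← Subcomplex.homOfLE_comp (facetUnion_mono _ (S.subset_insert j))
      (facetUnion_mono _ (Finset.insert_subset hj.1 hST))]
    infer_instance

variable {p} in
lemma hasLiftingProperty_facetUnion_ι (hsurj : ∀ m, Function.Surjective (p.app m))
    (hp : IsKanFibration p) (n : ℕ) (T : Finset (Fin (n + 1))) (hT : T ≠ .univ) :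
    HasLiftingProperty (facetUnion n T).ι p := by
  induction n with
  | zero =>
    obtain rfl : T = ∅ :=
      Finset.eq_empty_of_forall_notMem fun j hj ↦
        hT (Finset.eq_univ_of_forall fun k ↦ Fin.subsingleton_one.elim j k ▸ hj)
    rw [facetUnion_empty]
    exact hasLiftingProperty_bot_ι p hsurj 0
  | succ n ih =>
    obtain ⟨k, hkT⟩ : ∃ k, k ∉ T := by simpa [Finset.eq_univ_iff_forall] using hT
    have hTk : T ⊆ {k}ᶜ := fun j hj ↦ by simpa using ne_of_mem_of_not_mem hj hkT
    have := hasLiftingProperty_facetUnion_homOfLE p ih hTk (by simp [Finset.eq_univ_iff_forall])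
    have : HasLiftingProperty (facetUnion (n + 1) {k}ᶜ).ι p := by
      rw [facetUnion_compl_singleton]
      exact hp n k
    rw [← Subcomplex.homOfLE_ι (facetUnion_mono _ hTk)]
    infer_instance

variable {p} in
lemma exists_lift_of_horn (hsurj : ∀ m, Function.Surjective (p.app m)) (hp : IsKanFibration p)
    {n : ℕ} (i : Fin (n + 2)) :
    ∀ f : (Λ[n + 1, i] : SSet.{u}) ⟶ Y, ∃ f', f' ≫ p = f := by
  rw [← facetUnion_compl_singleton]
  have := hasLiftingProperty_facetUnion_homOfLE p (hasLiftingProperty_facetUnion_ι hsurj hp n)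
    (Finset.empty_subset {i}ᶜ) (by simp [Finset.eq_univ_iff_forall])
  exact HasLiftingProperty.exists_lift_of_isInitial
    (Subcomplex.isInitialBot.ofIso (Subcomplex.eqToIso (facetUnion_empty _)).symm)
    (Subcomplex.homOfLE (facetUnion_mono _ (Finset.empty_subset {i}ᶜ))) p

end

end SSet

theorem kanFibration_cancellation {X Y Z : SSet}
    (p : X ⟶ Y) (q : Y ⟶ Z)
    (hsurj : ∀ n : SimplexCategoryᵒᵖ, Function.Surjective (p.app n))
    (hp : IsKanFibration p) (hpq : IsKanFibration (p ≫ q)) :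
    IsKanFibration q := fun n i ↦
  have := hpq n i
  HasLiftingProperty.of_comp_of_exists_lift _ p q (exists_lift_of_horn hsurj hp i)
end

section
/- Let G be a simplicial group acting on a simplicial set X with X/G discrete. Then the canonical map G ×_{G_0} X_0 → X (from the quotient of G × X_0 by the relation (g·h, v) ~ (g, h·v) for h ∈ G_0, viewing X_0 as a discrete simplicial set) is an isomorphism if and only if the stabilizer simplicial group G_v is discrete for every vertex v ∈ X_0. -/
open CategoryTheory SSet Simplicial Opposite

/-- An action of a simplicial group `G` (a functor to `Grp`) on a simplicial
set `X`: levelwise group actions compatible with the simplicial operators. -/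
structure SimplicialAction (G : SimplexCategoryᵒᵖ ⥤ GrpCat.{0}) (X : SSet.{0}) where
  act : ∀ n : SimplexCategoryᵒᵖ, ∀ _ : G.obj n, X.obj n → X.obj n
  one_act : ∀ (n) (x : X.obj n), act n 1 x = x
  mul_act : ∀ (n) (g h : G.obj n) (x : X.obj n),
    act n (g * h) x = act n g (act n h x)
  naturality : ∀ {n m : SimplexCategoryᵒᵖ} (φ : n ⟶ m) (g : G.obj n) (x : X.obj n),
    X.map φ (act n g x) = act m (G.map φ g) (X.map φ x)

/-- The (iterated) degenerate simplex `s₀ⁿ(v)` of a vertex `v`, at an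
arbitrary simplicial level. -/
def vtx (X : SSet.{0}) (v : X _⦋0⦌) (n : SimplexCategoryᵒᵖ) : X.obj n :=
  X.map (SimplexCategory.const n.unop (SimplexCategory.mk 0) 0).op v

variable {G : SimplexCategoryᵒᵖ ⥤ GrpCat.{0}} {X : SSet.{0}}

/-- The orbit `Gv ⊆ X` of a vertex `v`, levelwise. -/
def orbitSet (A : SimplicialAction G X) (v : X _⦋0⦌) (n : SimplexCategoryᵒᵖ) :
    Set (X.obj n) :=
  {x | ∃ g : G.obj n, x = A.act n g (vtx X v n)}

/-- The stabilizer `G_v ⊆ G` of a vertex `v`, levelwise. -/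
def stabSet (A : SimplicialAction G X) (v : X _⦋0⦌) (n : SimplexCategoryᵒᵖ) :
    Set (G.obj n) :=
  {g | A.act n g (vtx X v n) = vtx X v n}

/-- The canonical degeneracy map `G_0 → G_n`. -/
def degMap (G : SimplexCategoryᵒᵖ ⥤ GrpCat.{0}) (n : SimplexCategoryᵒᵖ) :
    G.obj (op (SimplexCategory.mk 0)) → G.obj n :=
  G.map (SimplexCategory.const n.unop (SimplexCategory.mk 0) 0).op

/-- The relation on `G_n × X_0` generated by `(g · s₀ⁿ(h), v) ~ (g, h · v)`
for `h ∈ G_0`, whose quotient is `(G ×_{G_0} X_0)_n`. -/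
def balancedRel (A : SimplicialAction G X) (n : SimplexCategoryᵒᵖ)
    (p q : G.obj n × X _⦋0⦌) : Prop :=
  ∃ h : G.obj (op (SimplexCategory.mk 0)),
    p.1 = q.1 * degMap G n h ∧ q.2 = A.act (op (SimplexCategory.mk 0)) h p.2

/-- The canonical map `G × X_0 → X`, `(g, v) ↦ g · s₀ⁿ(v)`, which descends to
`G ×_{G_0} X_0 → X`. -/
def balancedMap (A : SimplicialAction G X) (n : SimplexCategoryᵒᵖ)
    (p : G.obj n × X _⦋0⦌) : X.obj n :=
  A.act n p.1 (vtx X p.2 n)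

/-!
The degeneracy `s₀ⁿ : G_0 → G_n` always maps the stabilizer of `v` into the stabilizer of
`s₀ⁿ(v)`, injectively since it has a face map as retraction, so discreteness of `G_v` is
surjectivity of these maps. If `g · s₀ⁿ(v) = g' · s₀ⁿ(w)`, discreteness of `X/G` gives
`w = h₀ · v` with `h₀ ∈ G_0`, and then `(g' · s₀ⁿ(h₀))⁻¹ g` stabilizes `s₀ⁿ(v)`; it is a
degeneracy `s₀ⁿ(h₁)` exactly when `(g, v)` and `(g', w)` are related by `h₀ h₁`.
Conversely, `(g, v)` and `(1, v)` have the same image for `g ∈ (G_v)_n`, and the relation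
identifying them exhibits `g` as a degeneracy.
-/

lemma vtx_zero (v : X _⦋0⦌) : vtx X v (op ⦋0⦌) = v := by
  rw [vtx, ← SimplexCategory.eq_const_to_zero (𝟙 ⦋0⦌)]
  simp

lemma degMap_zero (h : G.obj (op ⦋0⦌)) : degMap G (op ⦋0⦌) h = h := by
  rw [degMap, ← SimplexCategory.eq_const_to_zero (𝟙 ⦋0⦌)]
  simp

lemma map_degMap (h : G.obj (op ⦋0⦌)) {n m : SimplexCategoryᵒᵖ} (φ : n ⟶ m) :
    G.map φ (degMap G n h) = degMap G m h := by
  rw [degMap, degMap, ← CategoryTheory.comp_apply, ← G.map_comp]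
  congr 2

lemma degMap_injective (n : SimplexCategoryᵒᵖ) : Function.Injective (degMap G n) := by
  intro a b hab
  simpa only [map_degMap, degMap_zero] using
    congrArg (G.map (SimplexCategory.const ⦋0⦌ n.unop 0).op) hab

lemma degMap_mul (n : SimplexCategoryᵒᵖ) (a b : G.obj (op ⦋0⦌)) :
    degMap G n (a * b) = degMap G n a * degMap G n b :=
  map_mul (G.map _).hom a b

lemma degMap_one (n : SimplexCategoryᵒᵖ) : degMap G n 1 = 1 :=
  map_one (G.map _).hom

lemma degMap_inv (n : SimplexCategoryᵒᵖ) (a : G.obj (op ⦋0⦌)) :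
    degMap G n a⁻¹ = (degMap G n a)⁻¹ :=
  map_inv (G.map _).hom a

namespace SimplicialAction

variable (A : SimplicialAction G X)

lemma act_degMap_vtx (n : SimplexCategoryᵒᵖ) (h : G.obj (op ⦋0⦌)) (v : X _⦋0⦌) :
    A.act n (degMap G n h) (vtx X v n) = vtx X (A.act (op ⦋0⦌) h v) n :=
  (A.naturality (SimplexCategory.const n.unop ⦋0⦌ 0).op h v).symm

lemma mem_stabSet_zero {v : X _⦋0⦌} {h : G.obj (op ⦋0⦌)} :
    h ∈ stabSet A v (op ⦋0⦌) ↔ A.act (op ⦋0⦌) h v = v := by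
  rw [stabSet, Set.mem_ofPred_eq, vtx_zero]

lemma mapsTo_degMap_stabSet (v : X _⦋0⦌) (n : SimplexCategoryᵒᵖ) :
    Set.MapsTo (degMap G n) (stabSet A v (op ⦋0⦌)) (stabSet A v n) := by
  intro h hh
  rw [stabSet, Set.mem_ofPred_eq, act_degMap_vtx, A.mem_stabSet_zero.1 hh]

lemma bijOn_degMap_stabSet_iff_surjOn (v : X _⦋0⦌) (n : SimplexCategoryᵒᵖ) :
    Set.BijOn (degMap G n) (stabSet A v (op ⦋0⦌)) (stabSet A v n) ↔
      Set.SurjOn (degMap G n) (stabSet A v (op ⦋0⦌)) (stabSet A v n) :=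
  ⟨Set.BijOn.surjOn, fun hs =>
    ⟨A.mapsTo_degMap_stabSet v n, (degMap_injective n).injOn, hs⟩⟩

lemma balancedRel_equivalence (n : SimplexCategoryᵒᵖ) : Equivalence (balancedRel A n) where
  refl _ := ⟨1, by rw [degMap_one, mul_one], (A.one_act _ _).symm⟩
  symm := by
    rintro p q ⟨h, hg, hv⟩
    refine ⟨h⁻¹, ?_, ?_⟩
    · rw [hg, degMap_inv, mul_inv_cancel_right]
    · rw [hv, ← A.mul_act, inv_mul_cancel, A.one_act]
  trans := by
    rintro p q r ⟨h₁, hg₁, hv₁⟩ ⟨h₂, hg₂, hv₂⟩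
    refine ⟨h₂ * h₁, ?_, ?_⟩
    · rw [hg₁, hg₂, degMap_mul, mul_assoc]
    · rw [hv₂, hv₁, ← A.mul_act]

lemma eqvGen_balancedRel_iff (n : SimplexCategoryᵒᵖ) {p q : G.obj n × X _⦋0⦌} :
    Relation.EqvGen (balancedRel A n) p q ↔ balancedRel A n p q :=
  (A.balancedRel_equivalence n).eqvGen_iff

lemma balancedMap_eq_of_balancedRel (n : SimplexCategoryᵒᵖ) {p q : G.obj n × X _⦋0⦌}
    (hpq : balancedRel A n p q) : balancedMap A n p = balancedMap A n q := by
  obtain ⟨h, hg, hv⟩ := hpq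
  rw [balancedMap, balancedMap, hg, hv, A.mul_act, act_degMap_vtx]

lemma surjOn_degMap_stabSet (n : SimplexCategoryᵒᵖ)
    (hfib : ∀ p q : G.obj n × X _⦋0⦌,
      balancedMap A n p = balancedMap A n q → balancedRel A n p q)
    (v : X _⦋0⦌) :
    Set.SurjOn (degMap G n) (stabSet A v (op ⦋0⦌)) (stabSet A v n) := by
  intro g hg
  have hsame : balancedMap A n (g, v) = balancedMap A n (1, v) := by
    rw [balancedMap, balancedMap, A.one_act]
    exact hg
  obtain ⟨h, hgh, hvh⟩ := hfib (g, v) (1, v) hsame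
  exact ⟨h, A.mem_stabSet_zero.2 hvh.symm, by simpa using hgh.symm⟩

lemma balancedRel_of_balancedMap_eq
    (hinj : ∀ (v w : X _⦋0⦌) (n : SimplexCategoryᵒᵖ),
      (∃ g : G.obj n, A.act n g (vtx X v n) = vtx X w n) →
      ∃ g₀, A.act (op ⦋0⦌) g₀ (vtx X v (op ⦋0⦌)) = vtx X w (op ⦋0⦌))
    (n : SimplexCategoryᵒᵖ)
    (hstab : ∀ v : X _⦋0⦌,
      Set.SurjOn (degMap G n) (stabSet A v (op ⦋0⦌)) (stabSet A v n))
    {g g' : G.obj n} {v w : X _⦋0⦌}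
    (heq : balancedMap A n (g, v) = balancedMap A n (g', w)) :
    balancedRel A n (g, v) (g', w) := by
  replace heq : A.act n g (vtx X v n) = A.act n g' (vtx X w n) := heq
  have horbit : A.act n (g'⁻¹ * g) (vtx X v n) = vtx X w n := by
    rw [A.mul_act, heq, ← A.mul_act, inv_mul_cancel, A.one_act]
  obtain ⟨h₀, hh₀⟩ := hinj v w n ⟨_, horbit⟩
  rw [vtx_zero, vtx_zero] at hh₀
  have hw : vtx X w n = A.act n (degMap G n h₀) (vtx X v n) := by
    rw [act_degMap_vtx, hh₀]
  have hk : (g' * degMap G n h₀)⁻¹ * g ∈ stabSet A v n := by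
    change A.act n _ (vtx X v n) = vtx X v n
    rw [A.mul_act, heq, hw, ← A.mul_act, ← A.mul_act, mul_assoc, inv_mul_cancel, A.one_act]
  obtain ⟨h₁, hh₁, hdeg⟩ := hstab v hk
  refine ⟨h₀ * h₁, ?_, ?_⟩
  · rw [degMap_mul, ← mul_assoc, hdeg, mul_inv_cancel_left]
  · rw [A.mul_act, A.mem_stabSet_zero.1 hh₁, hh₀]

end SimplicialAction

theorem balanced_product_iso_iff_discrete_stabilizers (A : SimplicialAction G X)
    (hsurj : ∀ (n) (x : X.obj n), ∃ (v : X _⦋0⦌) (g : G.obj n),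
      x = A.act n g (vtx X v n))
    (hinj : ∀ (v w : X _⦋0⦌) (n : SimplexCategoryᵒᵖ),
      (∃ g : G.obj n, A.act n g (vtx X v n) = vtx X w n) →
      ∃ g₀, A.act (op (SimplexCategory.mk 0)) g₀
          (vtx X v (op (SimplexCategory.mk 0))) =
        vtx X w (op (SimplexCategory.mk 0))) :
    ((∀ n, Function.Surjective (balancedMap A n)) ∧
      (∀ (n) (p q : G.obj n × X _⦋0⦌),
        balancedMap A n p = balancedMap A n q ↔
          Relation.EqvGen (balancedRel A n) p q)) ↔
    (∀ (v : X _⦋0⦌) (n : SimplexCategoryᵒᵖ),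
      Set.BijOn (degMap G n) (stabSet A v (op (SimplexCategory.mk 0)))
        (stabSet A v n)) := by
  constructor
  · rintro ⟨-, hfib⟩ v n
    refine (A.bijOn_degMap_stabSet_iff_surjOn v n).2 (A.surjOn_degMap_stabSet n ?_ v)
    exact fun p q hpq => (A.eqvGen_balancedRel_iff n).1 ((hfib n p q).1 hpq)
  · intro hstab
    refine ⟨fun n x => ?_, fun n p q => ⟨fun hpq => ?_, fun hpq => ?_⟩⟩
    · obtain ⟨v, g, hx⟩ := hsurj n x
      exact ⟨(g, v), hx.symm⟩
    · exact Relation.EqvGen.rel _ _ (A.balancedRel_of_balancedMap_eq hinj n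
        (fun v => (hstab v n).surjOn) hpq)
    · exact A.balancedMap_eq_of_balancedRel n ((A.eqvGen_balancedRel_iff n).1 hpq)
end

section
/- A surjective morphism of simplicial groups is a Kan fibration. In particular, if f : A → B is a levelwise surjective map of simplicial abelian groups, then f is a Kan fibration. -/
open CategoryTheory SSet

/-!
Moore's algorithm. Let `f : G ⟶ H` be a surjective map of simplicial groups, `x` a horn in `G`
missing face `i`, and `y` a simplex of `H` with `d_j y = f x_j`. Start from any preimage `g` of
`y` and correct its faces one at a time, first `0, …, i - 1`, then `n + 1, …, i + 1`.
Correcting face `e ∈ {r, r + 1}` means multiplying `g` by `(s_r d_e g)⁻¹ · s_r x_e`: this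
makes `d_e g = x_e`, keeps every face `j ∉ {r, r + 1}` that was already right (by the simplicial
identities and the compatibility of the horn), and does not change `f g`, since
`f (s_r x_e) = s_r d_e y = f (s_r d_e g)`.
-/

open Simplicial Opposite

universe u

namespace SimplexCategory

lemma exists_δ_comp_σ_eq_comp_and_comp_δ_eq {n : ℕ} {r : Fin (n + 1)} {e j : Fin (n + 2)}
    (he : e = r.castSucc ∨ e = r.succ) (hjr : j ≠ r.castSucc) (hjr' : j ≠ r.succ) :
    ∃ (m : SimplexCategory) (a c : m ⟶ ⦋n⦌) (b : ⦋n⦌ ⟶ m),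
      δ j ≫ σ r = b ≫ a ∧ a ≫ δ e = c ≫ δ j := by
  simp only [ne_eq, Fin.ext_iff, Fin.val_castSucc, Fin.val_succ] at he hjr hjr'
  obtain _ | k := n
  · omega
  rcases Nat.lt_or_gt_of_ne hjr with hj | hj
  · obtain ⟨r, rfl⟩ : ∃ r' : Fin (k + 1), r = r'.succ :=
      ⟨⟨r - 1, by omega⟩, by ext; simp only [Fin.succ_mk]; omega⟩
    obtain ⟨j, rfl⟩ : ∃ j' : Fin (k + 2), j = j'.castSucc := ⟨⟨j, by omega⟩, rfl⟩
    obtain ⟨e, rfl⟩ : ∃ e' : Fin (k + 2), e = e'.succ :=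
      ⟨⟨e - 1, by omega⟩, by ext; simp only [Fin.succ_mk]; omega⟩
    simp only [Fin.val_succ, Fin.val_castSucc] at he hj
    exact ⟨⦋k⦌, δ j, δ e, σ r,
      δ_comp_σ_of_le (by rw [Fin.le_def, Fin.val_castSucc]; omega),
      δ_comp_δ (by rw [Fin.le_def]; omega)⟩
  · obtain ⟨r, rfl⟩ : ∃ r' : Fin (k + 1), r = r'.castSucc := ⟨⟨r, by omega⟩, rfl⟩
    simp only [Fin.val_castSucc] at he hj hjr'
    obtain ⟨j, rfl⟩ : ∃ j' : Fin (k + 2), j = j'.succ :=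
      ⟨⟨j - 1, by omega⟩, by ext; simp only [Fin.succ_mk]; omega⟩
    obtain ⟨e, rfl⟩ : ∃ e' : Fin (k + 2), e = e'.castSucc := ⟨⟨e, by omega⟩, rfl⟩
    simp only [Fin.val_succ, Fin.val_castSucc] at he hj hjr'
    exact ⟨⦋k⦌, δ j, δ e, σ r,
      δ_comp_σ_of_gt (by rw [Fin.lt_def, Fin.val_castSucc]; omega),
      (δ_comp_δ (by rw [Fin.le_def]; omega)).symm⟩

end SimplexCategory

lemma SSet.horn.map_face_eq_map_face {n : ℕ} {i e j : Fin (n + 2)} (he : e ≠ i) (hj : j ≠ i)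
    {m : SimplexCategory} {a c : m ⟶ ⦋n⦌}
    (h : a ≫ SimplexCategory.δ e = c ≫ SimplexCategory.δ j) :
    (Λ[n + 1, i] : SSet).map a.op (horn.face i e he) =
      (Λ[n + 1, i] : SSet).map c.op (horn.face i j hj) := by
  apply Subtype.ext
  show Δ[n + 1].map a.op (stdSimplex.objEquiv.symm (SimplexCategory.δ e)) =
    Δ[n + 1].map c.op (stdSimplex.objEquiv.symm (SimplexCategory.δ j))
  rw [stdSimplex.map_objEquiv_symm, stdSimplex.map_objEquiv_symm]
  exact congrArg _ h

namespace SimplicialGroup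

open SimplexCategory

variable {G H : SimplexCategoryᵒᵖ ⥤ GrpCat.{u}} {n : ℕ} {i : Fin (n + 2)}
  (u : (Λ[n + 1, i] : SSet) ⟶ G ⋙ forget GrpCat)

lemma map_app_eq_app_map {k l : SimplexCategoryᵒᵖ} (φ : k ⟶ l) (z : (Λ[n + 1, i] : SSet).obj k) :
    G.map φ (u.app k z) = u.app l ((Λ[n + 1, i] : SSet).map φ z) :=
  (NatTrans.naturality_apply u φ z).symm

def mooreStep (g : G.obj (op ⦋n + 1⦌)) (r : Fin (n + 1)) (e : Fin (n + 2)) (he : e ≠ i) :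
    G.obj (op ⦋n + 1⦌) :=
  g * (G.map (σ r).op (G.map (δ e).op g))⁻¹ * G.map (σ r).op (u.app _ (horn.face i e he))

variable {u} {g : G.obj (op ⦋n + 1⦌)} {r : Fin (n + 1)} {e : Fin (n + 2)} (he : e ≠ i)

lemma map_δ_mooreStep_self (hr : e = r.castSucc ∨ e = r.succ) :
    G.map (δ e).op (mooreStep u g r e he) = u.app _ (horn.face i e he) := by
  have hδσ : ∀ x, G.map (δ e).op (G.map (σ r).op x) = x := by
    intro x
    rw [← Functor.map_comp_apply, ← op_comp]
    rcases hr with rfl | rfl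
    · rw [δ_comp_σ_self, op_id, G.map_id]; rfl
    · rw [δ_comp_σ_succ, op_id, G.map_id]; rfl
  simp [mooreStep, hδσ]

lemma map_δ_mooreStep_of_ne (hr : e = r.castSucc ∨ e = r.succ) {j : Fin (n + 2)}
    (hjr : j ≠ r.castSucc) (hjr' : j ≠ r.succ) (hj : j ≠ i)
    (hg : G.map (δ j).op g = u.app _ (horn.face i j hj)) :
    G.map (δ j).op (mooreStep u g r e he) = u.app _ (horn.face i j hj) := by
  obtain ⟨m, a, c, b, hσ, hδ⟩ := exists_δ_comp_σ_eq_comp_and_comp_δ_eq hr hjr hjr'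
  have hδσ : ∀ x, G.map (δ j).op (G.map (σ r).op x) = G.map b.op (G.map a.op x) := by
    intro x
    rw [← Functor.map_comp_apply, ← Functor.map_comp_apply, ← op_comp, ← op_comp, hσ]
  have hδδ : G.map a.op (G.map (δ e).op g) = G.map a.op (u.app _ (horn.face i e he)) := by
    rw [← Functor.map_comp_apply, ← op_comp, hδ, op_comp, Functor.map_comp_apply, hg,
      map_app_eq_app_map, map_app_eq_app_map, horn.map_face_eq_map_face he hj hδ]
  simp [mooreStep, hδσ, hδδ, hg]

lemma app_mooreStep (f : G ⟶ H) {y : H.obj (op ⦋n + 1⦌)} (hg : f.app _ g = y)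
    (hy : f.app _ (u.app _ (horn.face i e he)) = H.map (δ e).op y) :
    f.app _ (mooreStep u g r e he) = y := by
  simp [mooreStep, NatTrans.naturality_apply f, hg, hy]

variable (u) in
def IsPartialHornFiller (f : G ⟶ H) (y : H.obj (op ⦋n + 1⦌)) (S : Set (Fin (n + 2)))
    (g : G.obj (op ⦋n + 1⦌)) : Prop :=
  f.app _ g = y ∧ ∀ j (hj : j ≠ i), j ∈ S → G.map (δ j).op g = u.app _ (horn.face i j hj)

variable {f : G ⟶ H} {y : H.obj (op ⦋n + 1⦌)} {S T : Set (Fin (n + 2))}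

lemma IsPartialHornFiller.mono (hg : IsPartialHornFiller u f y T g) (hST : S ⊆ T) :
    IsPartialHornFiller u f y S g :=
  ⟨hg.1, fun j hj hjS ↦ hg.2 j hj (hST hjS)⟩

lemma IsPartialHornFiller.mooreStep
    (hy : f.app _ (u.app _ (horn.face i e he)) = H.map (δ e).op y)
    (hg : IsPartialHornFiller u f y S g) (hr : e = r.castSucc ∨ e = r.succ)
    (hS : r.castSucc ∉ S) (hS' : r.succ ∉ S) :
    IsPartialHornFiller u f y (insert e S) (mooreStep u g r e he) := by
  refine ⟨app_mooreStep he f hg.1 hy, ?_⟩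
  rintro j hj (rfl | hjS)
  · exact map_δ_mooreStep_self he hr
  · exact map_δ_mooreStep_of_ne he hr (ne_of_mem_of_not_mem hjS hS)
      (ne_of_mem_of_not_mem hjS hS') hj (hg.2 j hj hjS)

variable (hu : ∀ j (hj : j ≠ i), f.app _ (u.app _ (horn.face i j hj)) = H.map (δ j).op y)
  {g₀ : G.obj (op ⦋n + 1⦌)} (hg₀ : f.app _ g₀ = y)
include hu hg₀

lemma exists_isPartialHornFiller_lt (a : ℕ) (ha : a ≤ i) :
    ∃ g, IsPartialHornFiller u f y {j | (j : ℕ) < a} g := by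
  induction a with
  | zero => exact ⟨g₀, hg₀, by simp⟩
  | succ a ih =>
    obtain ⟨g, hg⟩ := ih (by omega)
    let r : Fin (n + 1) := ⟨a, by omega⟩
    have he : r.castSucc ≠ i := by simp only [ne_eq, Fin.ext_iff, Fin.val_castSucc, r]; omega
    refine ⟨_, (hg.mooreStep he (hu _ he) (Or.inl rfl) (by simp [r]) (by simp [r])).mono ?_⟩
    intro j hj
    simp only [Set.mem_ofPred_eq, Set.mem_insert_iff, Fin.ext_iff, Fin.val_castSucc, r] at hj ⊢
    omega

lemma exists_isPartialHornFiller_lt_or_lt (t : ℕ) (ht : t ≤ n + 1 - i) :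
    ∃ g, IsPartialHornFiller u f y {j | (j : ℕ) < i ∨ n + 1 - t < j} g := by
  induction t with
  | zero =>
    obtain ⟨g, hg⟩ := exists_isPartialHornFiller_lt hu hg₀ i le_rfl
    refine ⟨g, hg.mono ?_⟩
    intro j hj
    simp only [Set.mem_ofPred_eq] at hj ⊢
    omega
  | succ t ih =>
    obtain ⟨g, hg⟩ := ih (by omega)
    let r : Fin (n + 1) := ⟨n - t, by omega⟩
    have he : r.succ ≠ i := by simp only [ne_eq, Fin.ext_iff, Fin.val_succ, r]; omega
    refine ⟨_, (hg.mooreStep he (hu _ he) (Or.inr rfl)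
      (by simp only [Set.mem_ofPred_eq, Fin.val_castSucc, r]; omega)
      (by simp only [Set.mem_ofPred_eq, Fin.val_succ, r]; omega)).mono ?_⟩
    intro j hj
    simp only [Set.mem_ofPred_eq, Set.mem_insert_iff, Fin.ext_iff, Fin.val_succ, r] at hj ⊢
    omega

lemma exists_isPartialHornFiller_ne : ∃ g, IsPartialHornFiller u f y {j | j ≠ i} g := by
  obtain ⟨g, hg⟩ := exists_isPartialHornFiller_lt_or_lt hu hg₀ (n + 1 - i) le_rfl
  refine ⟨g, hg.mono ?_⟩
  intro j hj
  simp only [Set.mem_ofPred_eq, ne_eq, Fin.ext_iff] at hj ⊢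
  omega

end SimplicialGroup

open SimplicialGroup in
theorem isKanFibration_whiskerRight_forget_of_surjective
    {G H : SimplexCategoryᵒᵖ ⥤ GrpCat.{u}} (f : G ⟶ H) (hf : ∀ n, Function.Surjective (f.app n)) :
    IsKanFibration (Functor.whiskerRight f (forget GrpCat)) := by
  refine fun n i ↦ ⟨fun {u v} sq ↦ ?_⟩
  obtain ⟨y, rfl⟩ := SSet.yonedaEquiv.symm.surjective v
  obtain ⟨g₀, hg₀⟩ := hf _ y
  have hu : ∀ j (hj : j ≠ i), f.app _ (u.app _ (horn.face i j hj)) =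
      H.map (SimplexCategory.δ j).op y :=
    fun j hj ↦ ConcreteCategory.congr_hom (NatTrans.congr_app sq.w _) (horn.face i j hj)
  obtain ⟨g, hgy, hgu⟩ := exists_isPartialHornFiller_ne hu hg₀
  refine ⟨⟨{ l := SSet.yonedaEquiv.symm g, fac_left := ?_, fac_right := ?_ }⟩⟩
  · exact horn.hom_ext _ _ fun j hj ↦ hgu j hj hj
  · apply SSet.yonedaEquiv.injective
    rw [yonedaEquiv_comp, Equiv.apply_symm_apply, Equiv.apply_symm_apply]
    exact hgy

theorem surjective_simplicial_group_hom_isKanFibration :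
    (∀ (G H : SimplexCategoryᵒᵖ ⥤ GrpCat.{0}) (f : G ⟶ H),
        (∀ n, Function.Surjective (f.app n)) →
        IsKanFibration (Functor.whiskerRight f (forget GrpCat))) ∧
    (∀ (A B : SimplexCategoryᵒᵖ ⥤ AddCommGrpCat.{0}) (f : A ⟶ B),
        (∀ n, Function.Surjective (f.app n)) →
        IsKanFibration (Functor.whiskerRight f (forget AddCommGrpCat))) :=
  -- Through `Multiplicative`, a simplicial abelian group is a simplicial group with the same
  -- underlying simplicial set, definitionally.
  ⟨fun _ _ f ↦ isKanFibration_whiskerRight_forget_of_surjective f,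
    fun _ _ f ↦ isKanFibration_whiskerRight_forget_of_surjective
      (Functor.whiskerRight f (forget₂ AddCommGrpCat AddGrpCat ⋙ AddGrpCat.toGrp))⟩
end

section
/- For a complete filtered cochain complex V and the simplicial cochain complex Ω_•(V) = Ω_• ⊗̂ V, the simplicial vector space of degree-k cohomology n ↦ H^k(Ω_n(V)) is discrete and isomorphic to the constant simplicial vector space H^k(V), for every integer k. -/
open scoped BigOperators

variable (K : Type) [Field K]

/-- Substitution of forms: given a polynomial substitution `φ` on the variables
`t_v` and a constant-coefficient linear substitution `ψ` on the generators
`dt_v` (`dt_v ↦ ∑_j ψ v j · dt_j`), the induced map `Ω_a^r → Ω_b^r`; the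
coefficient of `dt_{s'}` in the image of `p · dt_s` is the determinant of the
matrix of `ψ`-coefficients. -/
noncomputable def substForm {a b r : ℕ}
    (φ : Fin a → MvPolynomial (Fin b) K) (ψ : Fin a → Fin b → K)
    (f : Form K a r) : Form K b r := fun s' =>
  ∑ s ∈ ((Finset.univ : Finset (Finset (Fin a))).filter fun s => s.card = r).attach,
    (Matrix.det (Matrix.of fun p q : Fin r =>
        ψ ((s.1.orderIsoOfFin ((Finset.mem_filter.mp s.2).2)) p)
          ((s'.1.orderIsoOfFin s'.2) q))) •
      MvPolynomial.aeval φ (f ⟨s.1, (Finset.mem_filter.mp s.2).2⟩)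

/-- The polynomial part of the `i`-th face map `∂_i : Ω_{n+1} → Ω_n`
(setting the barycentric coordinate `t_i = 0`), in the reduced coordinates:
the variable `v` of `Ω_{n+1}` is the barycentric coordinate `t_{v+1}`. -/
noncomputable def facePhi (n : ℕ) (i : Fin (n + 2)) (v : Fin (n + 1)) :
    MvPolynomial (Fin n) K :=
  if h1 : v.1 + 1 < i.1 then MvPolynomial.X ⟨v.1, by have := i.2; omega⟩
  else if h2 : v.1 + 1 = i.1 then 0
  else if h3 : i.1 = 0 ∧ v.1 = 0 then 1 - ∑ j : Fin n, MvPolynomial.X j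
  else MvPolynomial.X ⟨v.1 - 1, by have := v.2; omega⟩

/-- The `dt`-part of the `i`-th face map `∂_i : Ω_{n+1} → Ω_n`. -/
def facePsi (n : ℕ) (i : Fin (n + 2)) (v : Fin (n + 1)) : Fin n → K :=
  if v.1 + 1 < i.1 then fun j => if j.1 = v.1 then 1 else 0
  else if v.1 + 1 = i.1 then 0
  else if i.1 = 0 ∧ v.1 = 0 then fun _ => -1
  else fun j => if j.1 = v.1 - 1 then 1 else 0

/-- The `i`-th simplicial face map `∂_i : Ω_{n+1}^r → Ω_n^r`. -/
noncomputable def faceForm {n r : ℕ} (i : Fin (n + 2)) (f : Form K (n + 1) r) :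
    Form K n r :=
  substForm K (facePhi K n i) (facePsi K n i) f

/-! ### Polynomial differential forms with coefficients

We model (the degreewise completion of) `Ω_n ⊗ V` for a graded module `V` by
"series of forms": a family indexed by a subset `s ⊆ {1,…,n}` (the form part
`dt_s`, in the reduced barycentric coordinates `t_1,…,t_n`) and a monomial
exponent `α` (the coefficient of `t^α`) with values in `V`. -/

/-- Elements of (the completion of) `Ω_n ⊗ V`: the value at `(s, α)` is the
coefficient of `t^α · dt_s`. -/
def FormSeries (V : Type*) (n : ℕ) : Type _ :=
  Finset (Fin n) → (Fin n →₀ ℕ) → V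

instance (V : Type*) [AddCommGroup V] (n : ℕ) : AddCommGroup (FormSeries V n) := by
  unfold FormSeries; infer_instance

noncomputable instance (V : Type*) [AddCommGroup V] [Module K V] (n : ℕ) :
    Module K (FormSeries V n) := by
  unfold FormSeries; infer_instance

variable {V : Type*} [AddCommGroup V] [Module K V]

/-- Homogeneity: `ξ` has total degree `p` iff the coefficient of `t^α dt_s`
lies in `deg (p - |s|)`. -/
def SeriesDeg (deg : ℤ → Submodule K V) (p : ℤ) {n : ℕ} (ξ : FormSeries V n) : Prop :=
  ∀ (s : Finset (Fin n)) (β : Fin n →₀ ℕ), ξ s β ∈ deg (p - s.card)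

/-- Membership in the completed tensor product `Ω_n ⊗̂ V` for a filtration `F`
on `V`: for each fixed form part and each filtration level, only finitely many
coefficients lie outside the filtration level. -/
def SeriesReg (F : ℕ → Submodule K V) {n : ℕ} (ξ : FormSeries V n) : Prop :=
  ∀ (s : Finset (Fin n)) (m : ℕ), {β | ξ s β ∉ F m}.Finite

/-- Membership in the plain tensor product `Ω_n ⊗ V` (finitely many nonzero
coefficients; appropriate for trivially filtered `V`). -/
def SeriesPoly {n : ℕ} (ξ : FormSeries V n) : Prop :=
  ∀ s : Finset (Fin n), {β | ξ s β ≠ 0}.Finite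

/-- The differential of `Ω_n ⊗ V`: `d_Ω ⊗ 1 + (-1)^{form degree} ⊗ d_V`. -/
noncomputable def seriesD (dV : V →ₗ[K] V) {n : ℕ} (ξ : FormSeries V n) :
    FormSeries V n := fun s β =>
  (∑ i ∈ s.attach,
    ((-1 : K) ^ ((s.filter fun j => j < i.1).card)) •
      ((β i.1 + 1) • ξ (s.erase i.1) (β + Finsupp.single i.1 1))) +
  ((-1 : K) ^ s.card) • dV (ξ s β)

/-- The image of `x ∈ V` under the unit `V → Ω_n ⊗ V` (equivalently, the
`n`-fold degeneracy of `x`). -/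
def unitSeries (n : ℕ) (x : V) : FormSeries V n := fun s β =>
  if s = ∅ ∧ β = 0 then x else 0

/-- The `m`-simplex `ω^m ⊗ x`, where `ω^m = m! dt_1 ⋯ dt_m` is the normalized
volume form. -/
noncomputable def omegaSeries (m : ℕ) (x : V) : FormSeries V m := fun s β =>
  if s = Finset.univ ∧ β = 0 then (m.factorial : K) • x else 0

/-- The structure coefficient of the `i`-th face map on `Ω_{n+1} ⊗ V`: the
coefficient with which `t^α dt_s` contributes to `t^β dt_{s'}`. -/
noncomputable def faceCoeff (n : ℕ) (i : Fin (n + 2)) (s : Finset (Fin (n + 1)))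
    (α : Fin (n + 1) →₀ ℕ) (s' : Finset (Fin n)) (β : Fin n →₀ ℕ) : K :=
  if h : s.card = s'.card then
    Matrix.det (Matrix.of fun p q : Fin s'.card =>
      facePsi K n i (s.orderIsoOfFin h p) (s'.orderIsoOfFin rfl q)) *
      MvPolynomial.coeff β (α.prod fun v e => facePhi K n i v ^ e)
  else 0

/-- The `i`-th face map on the plain tensor product `Ω_{n+1} ⊗ V` (the finite
sum is expressed with `finsum`). -/
noncomputable def faceSeries {n : ℕ} (i : Fin (n + 2)) (ξ : FormSeries V (n + 1)) :
    FormSeries V n := fun s' β =>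
  ∑ᶠ p : Finset (Fin (n + 1)) × (Fin (n + 1) →₀ ℕ),
    faceCoeff K n i p.1 p.2 s' β • ξ p.1 p.2

/-- Convergence of (possibly infinite) sums with respect to a filtration `F`:
`l` is the limit of the partial sums of `f`. -/
def HasSumF (F : ℕ → Submodule K V) {ι : Type*} (f : ι → V) (l : V) : Prop :=
  ∀ m : ℕ, ∃ s₀ : Finset ι, ∀ s : Finset ι, s₀ ⊆ s → l - ∑ i ∈ s, f i ∈ F m

/-- The `i`-th face map on the completed tensor product `Ω_{n+1} ⊗̂ V`, as a
relation (`faceSeriesC F i ξ χ` ⟺ `∂_i ξ = χ`); the infinite sums converge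
with respect to the filtration, and the value is unique by separatedness. -/
def faceSeriesC (F : ℕ → Submodule K V) {n : ℕ} (i : Fin (n + 2))
    (ξ : FormSeries V (n + 1)) (χ : FormSeries V n) : Prop :=
  ∀ (s' : Finset (Fin n)) (β : Fin n →₀ ℕ),
    HasSumF K F
      (fun p : Finset (Fin (n + 1)) × (Fin (n + 1) →₀ ℕ) =>
        faceCoeff K n i p.1 p.2 s' β • ξ p.1 p.2)
      (χ s' β)

/-- `IsCompleteFilteredComplex K V deg F d`: the `ℤ`-graded `K`-module `V` with
differential `d` of degree `+1` and decreasing filtration `F` (with `F 1 = V`)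
by subcomplexes is a complete filtered cochain complex. -/
structure IsCompleteFilteredComplex (V : Type*) [AddCommGroup V] [Module K V]
    (deg : ℤ → Submodule K V) (F : ℕ → Submodule K V) (d : V →ₗ[K] V) : Prop where
  grading : DirectSum.IsInternal deg
  d_deg : ∀ (i : ℤ) (x : V), x ∈ deg i → d x ∈ deg (i + 1)
  d_sq : ∀ x : V, d (d x) = 0
  F_one : F 1 = ⊤
  F_mono : ∀ n, F (n + 1) ≤ F n
  d_F : ∀ (n : ℕ) (x : V), x ∈ F n → d x ∈ F n
  separated : ∀ x : V, (∀ n, x ∈ F n) → x = 0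
  complete : ∀ c : ℕ → V, (∀ n, c (n + 1) - c n ∈ F (n + 1)) →
    ∃ l : V, ∀ n, l - c n ∈ F (n + 1)

section Homotopy

variable {K : Type} [Field K] {V : Type*} [AddCommGroup V] [Module K V] {n : ℕ}

/-- Contraction with the Euler vector field on `Ω_n ⊗̂ V`. -/
noncomputable def Iop (K : Type) [Field K] {V : Type*} [AddCommGroup V] [Module K V] {n : ℕ}
    (ξ : FormSeries V n) : FormSeries V n := fun s β =>
  ∑ i ∈ sᶜ, if 1 ≤ β i then
      ((-1 : K) ^ ((s.filter (fun j => j < i)).card)) •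
        ξ (insert i s) (β - Finsupp.single i 1)
    else 0

/-- The contracting homotopy: Euler contraction divided by total weight. -/
noncomputable def Hop (K : Type) [Field K] {V : Type*} [AddCommGroup V] [Module K V] {n : ℕ}
    (ξ : FormSeries V n) : FormSeries V n := fun s β =>
  (((s.card + ∑ i, β i : ℕ) : K))⁻¹ • Iop K ξ s β

/-- The polynomial part of the differential. -/
noncomputable def Pop (K : Type) [Field K] {V : Type*} [AddCommGroup V] [Module K V] {n : ℕ}
    (ξ : FormSeries V n) : FormSeries V n := fun s β =>
  ∑ i ∈ s, ((-1 : K) ^ ((s.filter (fun j => j < i)).card)) •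
      ((β i + 1) • ξ (s.erase i) (β + Finsupp.single i 1))

lemma seriesD_eq (dV : V →ₗ[K] V) (ξ : FormSeries V n) (s : Finset (Fin n)) (β : Fin n →₀ ℕ) :
    seriesD K dV ξ s β = Pop K ξ s β + ((-1 : K) ^ s.card) • dV (ξ s β) := by
  unfold seriesD Pop
  rw [Finset.sum_attach s (fun i => ((-1 : K) ^ ((s.filter (fun j => j < i)).card)) •
      ((β i + 1) • ξ (s.erase i) (β + Finsupp.single i 1)))]

lemma sign_sq (a : ℕ) (x : V) : ((-1 : K) ^ a) • ((-1 : K) ^ a) • x = x := by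
  rw [smul_smul, ← pow_add, Even.neg_one_pow ⟨a, rfl⟩, one_smul]

lemma finsupp_add_sub (β : Fin n →₀ ℕ) (i : Fin n) :
    β + Finsupp.single i 1 - Finsupp.single i 1 = β := by
  ext a; simp [Finsupp.tsub_apply]

lemma finsupp_sub_add (β : Fin n →₀ ℕ) (j : Fin n) (h : 1 ≤ β j) :
    β - Finsupp.single j 1 + Finsupp.single j 1 = β :=
  tsub_add_cancel_of_le (Finsupp.single_le_iff.mpr h)

lemma finsupp_add_sub_comm (β : Fin n →₀ ℕ) {i j : Fin n} (hij : i ≠ j) :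
    β + Finsupp.single i 1 - Finsupp.single j 1 = β - Finsupp.single j 1 + Finsupp.single i 1 := by
  ext a
  simp only [Finsupp.tsub_apply, Finsupp.add_apply, Finsupp.single_apply]
  rcases eq_or_ne j a with rfl | hja
  · simp [hij]
  · simp [hja]

lemma finsupp_apply_add_single (β : Fin n →₀ ℕ) {i j : Fin n} (hij : j ≠ i) :
    (β + Finsupp.single i 1 : Fin n →₀ ℕ) j = β j := by
  simp [Finsupp.single_apply, Ne.symm hij]

lemma finsupp_apply_sub_single (β : Fin n →₀ ℕ) {i j : Fin n} (hij : i ≠ j) :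
    (β - Finsupp.single j 1 : Fin n →₀ ℕ) i = β i := by
  simp [Finsupp.tsub_apply, Finsupp.single_apply, Ne.symm hij]

lemma filter_lt_self_erase (s : Finset (Fin n)) (i : Fin n) :
    ((s.erase i).filter (fun j => j < i)).card = (s.filter (fun j => j < i)).card := by
  rw [Finset.filter_erase, Finset.erase_eq_of_notMem]
  simp

lemma filter_lt_self_insert (s : Finset (Fin n)) (j : Fin n) :
    (((insert j s).filter (fun m => m < j)).card) = (s.filter (fun m => m < j)).card := by
  rw [Finset.filter_insert]
  simp

/-- The key sign identity making off-diagonal terms cancel. -/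
lemma sign_cancel (s : Finset (Fin n)) {i j : Fin n} (hi : i ∈ s) (hj : j ∉ s) :
    ((-1 : K) ^ (s.filter (fun m => m < i)).card) *
      ((-1 : K) ^ ((s.erase i).filter (fun m => m < j)).card)
    + ((-1 : K) ^ (s.filter (fun m => m < j)).card) *
      ((-1 : K) ^ ((insert j s).filter (fun m => m < i)).card) = 0 := by
  have hij : i ≠ j := fun h => hj (h ▸ hi)
  rw [Finset.filter_erase, Finset.filter_insert]
  rcases lt_or_gt_of_ne hij with hlt | hgt
  · have hib : i ∈ s.filter (fun m => m < j) := Finset.mem_filter.mpr ⟨hi, hlt⟩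
    rw [if_neg (not_lt.mpr hlt.le), Finset.card_erase_of_mem hib]
    obtain ⟨c, hc⟩ : ∃ c, (s.filter (fun m => m < j)).card = c + 1 :=
      ⟨_, (Nat.succ_pred_eq_of_pos (Finset.card_pos.mpr ⟨i, hib⟩)).symm⟩
    rw [hc, Nat.add_sub_cancel, pow_succ]
    ring
  · have hif : i ∉ s.filter (fun m => m < j) := by
      simp only [Finset.mem_filter]; rintro ⟨-, h⟩; exact absurd h (not_lt.mpr hgt.le)
    have hjf : j ∉ s.filter (fun m => m < i) := fun h => hj (Finset.mem_filter.mp h).1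
    rw [if_pos hgt, Finset.erase_eq_of_notMem hif, Finset.card_insert_of_notMem hjf, pow_succ]
    ring

end Homotopy
section Homotopy2

variable {K : Type} [Field K] {V : Type*} [AddCommGroup V] [Module K V] {n : ℕ}

lemma smul_rot (a c : K) (m : ℕ) (x : V) : a • (m • (c • x)) = c • (a • (m • x)) := by
  rw [smul_comm m c, smul_comm a c]

lemma cartan_dv (dV : V →ₗ[K] V) (ξ : FormSeries V n) (s : Finset (Fin n)) (β : Fin n →₀ ℕ) :
    ((-1 : K) ^ s.card) • dV (Iop K ξ s β)
      + Iop K (fun s' β' => ((-1 : K) ^ s'.card) • dV (ξ s' β')) s β = 0 := by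
  unfold Iop
  rw [map_sum, Finset.smul_sum, ← Finset.sum_add_distrib]
  apply Finset.sum_eq_zero
  intro i hi
  have hins : (insert i s).card = s.card + 1 :=
    Finset.card_insert_of_notMem (Finset.mem_compl.mp hi)
  split_ifs with h
  · simp only [map_smul, hins, pow_succ]
    module
  · simp

lemma combine_aux {P Q R : ℕ} {X Y v : V} (h1 : X + Y = 0) (h2 : P + Q = R) :
    (P • v + X) + (Q • v + Y) = R • v := by
  have : (P • v + X) + (Q • v + Y) = (P • v + Q • v) + (X + Y) := by abel
  rw [this, h1, add_zero, ← add_smul, h2]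

lemma cartan_poly (ξ : FormSeries V n) (s : Finset (Fin n)) (β : Fin n →₀ ℕ) :
    Pop K (Iop K ξ) s β + Iop K (Pop K ξ) s β = (s.card + ∑ i, β i) • ξ s β := by
  have hA : Pop K (Iop K ξ) s β
      = (∑ i ∈ s, (β i + 1)) • ξ s β
        + ∑ i ∈ s, ∑ j ∈ sᶜ, (if 1 ≤ β j then
            (((-1 : K) ^ (s.filter (fun m => m < i)).card) *
             ((-1 : K) ^ ((s.erase i).filter (fun m => m < j)).card)) •
              ((β i + 1) •
                ξ (insert j (s.erase i)) (β - Finsupp.single j 1 + Finsupp.single i 1))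
          else 0) := by
    unfold Pop Iop
    rw [Finset.sum_smul, ← Finset.sum_add_distrib]
    refine Finset.sum_congr rfl fun i hi => ?_
    have hio : i ∉ sᶜ := by simp [hi]
    rw [Finset.compl_erase, Finset.sum_insert hio]
    have hcond : 1 ≤ (β + Finsupp.single i 1 : Fin n →₀ ℕ) i := by
      simp [Finsupp.add_apply, Finsupp.single_eq_same]
    rw [if_pos hcond, Finset.insert_erase hi, finsupp_add_sub, filter_lt_self_erase]
    rw [smul_add, smul_add]
    congr 1
    · rw [smul_comm (β i + 1) ((-1 : K) ^ (s.filter (fun j => j < i)).card) (ξ s β), sign_sq]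
    · rw [Finset.smul_sum, Finset.smul_sum]
      refine Finset.sum_congr rfl fun j hj => ?_
      have hji : j ≠ i := fun h => hio (h ▸ hj)
      rw [finsupp_apply_add_single β hji, finsupp_add_sub_comm β (Ne.symm hji)]
      split_ifs with h
      · rw [smul_comm (β i + 1), smul_smul]
      · simp
  have hB : Iop K (Pop K ξ) s β
      = (∑ j ∈ sᶜ, β j) • ξ s β
        + ∑ j ∈ sᶜ, ∑ i ∈ s, (if 1 ≤ β j then
            (((-1 : K) ^ (s.filter (fun m => m < j)).card) *
             ((-1 : K) ^ ((insert j s).filter (fun m => m < i)).card)) •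
              ((β i + 1) •
                ξ (insert j (s.erase i)) (β - Finsupp.single j 1 + Finsupp.single i 1))
          else 0) := by
    unfold Pop Iop
    rw [Finset.sum_smul, ← Finset.sum_add_distrib]
    refine Finset.sum_congr rfl fun j hj => ?_
    have hjs : j ∉ s := Finset.mem_compl.mp hj
    by_cases h : 1 ≤ β j
    · rw [if_pos h]
      beta_reduce
      rw [Finset.sum_insert hjs]
      have e1 : ((β - Finsupp.single j 1 : Fin n →₀ ℕ) j + 1) = β j := by
        simp only [Finsupp.tsub_apply, Finsupp.single_eq_same]
        omega
      rw [filter_lt_self_insert, e1, Finset.erase_insert hjs, finsupp_sub_add β j h]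
      rw [smul_add]
      congr 1
      · rw [smul_smul, ← pow_add, Even.neg_one_pow ⟨_, rfl⟩, one_smul]
      · rw [Finset.smul_sum]
        refine Finset.sum_congr rfl fun i hi => ?_
        have hij : i ≠ j := fun hh => hjs (hh ▸ hi)
        rw [if_pos h, finsupp_apply_sub_single β hij,
          Finset.erase_insert_of_ne (Ne.symm hij), smul_smul]
    · rw [if_neg h]
      have hb0 : β j = 0 := by omega
      rw [hb0, zero_smul, zero_add]
      refine (Finset.sum_eq_zero fun i _ => by simp).symm
  rw [hA, hB]
  have hswap : ∑ j ∈ sᶜ, ∑ i ∈ s, (if 1 ≤ β j then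
            (((-1 : K) ^ (s.filter (fun m => m < j)).card) *
             ((-1 : K) ^ ((insert j s).filter (fun m => m < i)).card)) •
              ((β i + 1) •
                ξ (insert j (s.erase i)) (β - Finsupp.single j 1 + Finsupp.single i 1))
          else 0)
      = ∑ i ∈ s, ∑ j ∈ sᶜ, (if 1 ≤ β j then
            (((-1 : K) ^ (s.filter (fun m => m < j)).card) *
             ((-1 : K) ^ ((insert j s).filter (fun m => m < i)).card)) •
              ((β i + 1) •
                ξ (insert j (s.erase i)) (β - Finsupp.single j 1 + Finsupp.single i 1))
          else 0) := Finset.sum_comm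
  rw [hswap]
  have hcancel : ∀ i ∈ s, ∀ j ∈ sᶜ,
      (if 1 ≤ β j then
            (((-1 : K) ^ (s.filter (fun m => m < i)).card) *
             ((-1 : K) ^ ((s.erase i).filter (fun m => m < j)).card)) •
              ((β i + 1) •
                ξ (insert j (s.erase i)) (β - Finsupp.single j 1 + Finsupp.single i 1))
          else 0)
      + (if 1 ≤ β j then
            (((-1 : K) ^ (s.filter (fun m => m < j)).card) *
             ((-1 : K) ^ ((insert j s).filter (fun m => m < i)).card)) •
              ((β i + 1) •
                ξ (insert j (s.erase i)) (β - Finsupp.single j 1 + Finsupp.single i 1))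
          else 0) = 0 := by
    intro i hi j hj
    split_ifs with h
    · rw [← add_smul, sign_cancel s hi (Finset.mem_compl.mp hj), zero_smul]
    · rw [add_zero]
  have hzero : (∑ i ∈ s, ∑ j ∈ sᶜ, (if 1 ≤ β j then
            (((-1 : K) ^ (s.filter (fun m => m < i)).card) *
             ((-1 : K) ^ ((s.erase i).filter (fun m => m < j)).card)) •
              ((β i + 1) •
                ξ (insert j (s.erase i)) (β - Finsupp.single j 1 + Finsupp.single i 1))
          else 0))
      + (∑ i ∈ s, ∑ j ∈ sᶜ, (if 1 ≤ β j then
            (((-1 : K) ^ (s.filter (fun m => m < j)).card) *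
             ((-1 : K) ^ ((insert j s).filter (fun m => m < i)).card)) •
              ((β i + 1) •
                ξ (insert j (s.erase i)) (β - Finsupp.single j 1 + Finsupp.single i 1))
          else 0)) = 0 := by
    rw [← Finset.sum_add_distrib]
    refine Finset.sum_eq_zero fun i hi => ?_
    rw [← Finset.sum_add_distrib]
    exact Finset.sum_eq_zero fun j hj => hcancel i hi j hj
  have hscal : (∑ i ∈ s, (β i + 1)) + (∑ j ∈ sᶜ, β j) = s.card + ∑ i, β i := by
    have h1 : ∑ i ∈ s, (β i + 1) = (∑ i ∈ s, β i) + s.card := by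
      rw [Finset.sum_add_distrib, Finset.sum_const, smul_eq_mul, mul_one]
    have h2 := Finset.sum_add_sum_compl s (fun i => β i)
    omega
  exact combine_aux hzero hscal

end Homotopy2
section Homotopy3

variable {K : Type} [Field K] {V : Type*} [AddCommGroup V] [Module K V] {n : ℕ}

lemma hop_weight (ξ : FormSeries V n) (s : Finset (Fin n)) (β : Fin n →₀ ℕ) :
    Hop K ξ s β = (((s.card + ∑ i, β i : ℕ) : K))⁻¹ • Iop K ξ s β := rfl

/-- The homotopy identity: `D ∘ H + H ∘ D = 1 - π`. -/
lemma cartan [CharZero K] (dV : V →ₗ[K] V) (ξ : FormSeries V n)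
    (s : Finset (Fin n)) (β : Fin n →₀ ℕ) :
    seriesD K dV (Hop K ξ) s β + Hop K (seriesD K dV ξ) s β
      = ξ s β - unitSeries n (ξ ∅ 0) s β := by
  have hsplit : Iop K (seriesD K dV ξ) s β
      = Iop K (Pop K ξ) s β
        + Iop K (fun s' β' => ((-1 : K) ^ s'.card) • dV (ξ s' β')) s β := by
    unfold Iop
    rw [← Finset.sum_add_distrib]
    refine Finset.sum_congr rfl fun i _ => ?_
    rw [seriesD_eq]
    split_ifs with h
    · rw [smul_add]
    · rw [add_zero]
  have hPop : Pop K (Hop K ξ) s β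
      = (((s.card + ∑ i, β i : ℕ) : K))⁻¹ • Pop K (Iop K ξ) s β := by
    unfold Pop
    rw [Finset.smul_sum]
    refine Finset.sum_congr rfl fun i hi => ?_
    have hsum1 : ∑ j, (β + Finsupp.single i 1 : Fin n →₀ ℕ) j = (∑ j, β j) + 1 := by
      simp only [Finsupp.add_apply]
      rw [Finset.sum_add_distrib]
      congr 1
      simp [Finsupp.single_apply]
    have hcard : 1 ≤ s.card := Finset.card_pos.mpr ⟨i, hi⟩
    have hww : (s.erase i).card + ∑ j, (β + Finsupp.single i 1 : Fin n →₀ ℕ) j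
        = s.card + ∑ j, β j := by
      rw [Finset.card_erase_of_mem hi, hsum1]
      omega
    rw [hop_weight, hww, smul_rot]
  have hdV : dV (Hop K ξ s β)
      = (((s.card + ∑ i, β i : ℕ) : K))⁻¹ • dV (Iop K ξ s β) := by
    rw [hop_weight, map_smul]
  have key : seriesD K dV (Hop K ξ) s β + Hop K (seriesD K dV ξ) s β
      = (((s.card + ∑ i, β i : ℕ) : K))⁻¹ • ((s.card + ∑ i, β i) • ξ s β) := by
    rw [seriesD_eq, hPop, hdV, hop_weight, hsplit, smul_comm ((-1 : K) ^ s.card),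
      ← smul_add, ← smul_add]
    congr 1
    have h1 := cartan_poly (K := K) ξ s β
    have h2 := cartan_dv dV ξ s β
    rw [← h1, ← add_zero (Pop K (Iop K ξ) s β + Iop K (Pop K ξ) s β), ← h2]
    abel
  rw [key]
  by_cases h0 : s.card + ∑ i, β i = 0
  · have hs : s = ∅ := Finset.card_eq_zero.mp (by omega)
    have hβ : β = 0 := by
      ext i
      have hsum : ∑ j, β j = 0 := by omega
      simpa using Finset.sum_eq_zero_iff.mp hsum i (Finset.mem_univ i)
    subst hs
    subst hβ
    simp [unitSeries]
  · have hne : ¬(s = ∅ ∧ β = 0) := by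
      rintro ⟨rfl, rfl⟩
      simp at h0
    rw [show unitSeries n (ξ ∅ 0) s β = 0 from by simp only [unitSeries, if_neg hne], sub_zero,
      ← Nat.cast_smul_eq_nsmul K (s.card + ∑ i, β i) (ξ s β), smul_smul,
      inv_mul_cancel₀ (Nat.cast_ne_zero.mpr h0), one_smul]

end Homotopy3
/-!
STATEMENT 11: for a complete filtered cochain complex `V` and the simplicial
cochain complex `Ω_•(V) = Ω_• ⊗̂ V`, the simplicial vector space
`n ↦ H^k(Ω_n(V))` is discrete and isomorphic to the constant simplicial
vector space `H^k(V)`, for every integer `k`: in every simplicial level the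
unit map `V → Ω_n ⊗̂ V` induces an isomorphism `H^k(V) ≅ H^k(Ω_n(V))`
(compatibly with the simplicial operators, all of which restrict to the
identity of `H^k(V)` under these identifications). -/
theorem cohomology_of_forms_discrete [CharZero K]
    (V : Type*) [AddCommGroup V] [Module K V]
    (deg : ℤ → Submodule K V) (F : ℕ → Submodule K V) (dV : V →ₗ[K] V)
    (hV : IsCompleteFilteredComplex K V deg F dV) (k : ℤ) (n : ℕ) :
    -- the unit map sends cocycles to cocycles
    (∀ x : V, dV x = 0 → seriesD K dV (unitSeries n x) = 0) ∧
    -- surjectivity on `H^k`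
    (∀ ξ : FormSeries V n, SeriesReg K F ξ → SeriesDeg K deg k ξ →
      seriesD K dV ξ = 0 →
      ∃ x ∈ deg k, dV x = 0 ∧
        ∃ η : FormSeries V n, SeriesReg K F η ∧ SeriesDeg K deg (k - 1) η ∧
          ξ - unitSeries n x = seriesD K dV η) ∧
    -- injectivity on `H^k`
    (∀ x ∈ deg k, dV x = 0 →
      (∃ η : FormSeries V n, SeriesReg K F η ∧ SeriesDeg K deg (k - 1) η ∧
        unitSeries n x = seriesD K dV η) →
      ∃ y ∈ deg (k - 1), dV y = x) := by
  refine ⟨?_, ?_, ?_⟩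
  · -- unit of a cocycle is a cocycle
    intro x hx
    funext s β
    show seriesD K dV (unitSeries n x) s β = 0
    have hPz : Pop K (unitSeries n x) s β = 0 := by
      apply Finset.sum_eq_zero
      intro i _
      have hne : ¬(s.erase i = ∅ ∧ β + Finsupp.single i 1 = 0) := by
        rintro ⟨-, h2⟩
        have h3 := DFunLike.congr_fun h2 i
        simp at h3
      simp only [unitSeries, if_neg hne, smul_zero]
    rw [seriesD_eq, hPz, zero_add]
    simp only [unitSeries, apply_ite dV, hx, map_zero, ite_self, smul_zero]
  · -- surjectivity
    intro ξ hreg hdeg hclosed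
    have hx0 : dV (ξ ∅ 0) = 0 := by
      have h : seriesD K dV ξ ∅ 0 = 0 := by rw [hclosed]; rfl
      rw [seriesD_eq] at h
      simpa [Pop] using h
    refine ⟨ξ ∅ 0, by simpa using hdeg ∅ 0, hx0, Hop K ξ, ?_, ?_, ?_⟩
    · -- regularity of the homotopy
      intro s m
      have hsub : {β | Hop K ξ s β ∉ F m} ⊆
          ⋃ i : Fin n, (fun α => α + Finsupp.single i 1) ''
            {α | ξ (insert i s) α ∉ F m} := by
        intro β hβ
        simp only [Set.mem_setOf_eq] at hβ
        by_contra hc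
        apply hβ
        simp only [Set.mem_iUnion, Set.mem_image, Set.mem_setOf_eq, not_exists, not_and] at hc
        rw [hop_weight]
        refine Submodule.smul_mem _ _ ?_
        unfold Iop
        refine Submodule.sum_mem _ fun i _ => ?_
        split_ifs with h
        · refine Submodule.smul_mem _ _ ?_
          by_contra hnot
          exact hc i (β - Finsupp.single i 1) hnot (finsupp_sub_add β i h)
        · exact Submodule.zero_mem _
      exact Set.Finite.subset
        (Set.finite_iUnion fun i => Set.Finite.image _ (hreg (insert i s) m)) hsub
    · -- degree of the homotopy
      intro s β
      rw [hop_weight]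
      refine Submodule.smul_mem _ _ ?_
      unfold Iop
      refine Submodule.sum_mem _ fun i hi => ?_
      split_ifs with h
      · refine Submodule.smul_mem _ _ ?_
        have hmem := hdeg (insert i s) (β - Finsupp.single i 1)
        have hc : ((insert i s).card : ℤ) = (s.card : ℤ) + 1 := by
          rw [Finset.card_insert_of_notMem (Finset.mem_compl.mp hi)]
          push_cast
          ring
        rw [hc, show k - ((s.card : ℤ) + 1) = k - 1 - s.card from by ring] at hmem
        exact hmem
      · exact Submodule.zero_mem _
    · -- the homotopy identity
      funext s β
      have hI : Iop K (0 : FormSeries V n) s β = 0 := by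
        unfold Iop
        apply Finset.sum_eq_zero
        intro i _
        split_ifs
        · show _ • (0 : V) = 0
          exact smul_zero _
        · rfl
      have hH0 : Hop K (0 : FormSeries V n) s β = 0 := by
        rw [hop_weight, hI, smul_zero]
      have hc := cartan dV ξ s β
      rw [hclosed, hH0, add_zero] at hc
      show ξ s β - unitSeries n (ξ ∅ 0) s β = seriesD K dV (Hop K ξ) s β
      exact hc.symm
  · -- injectivity
    rintro x hxdeg hdx ⟨η, hreg, hdeg, heq⟩
    refine ⟨η ∅ 0, by simpa using hdeg ∅ 0, ?_⟩
    have h := congrFun (congrFun heq ∅) (0 : Fin n →₀ ℕ)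
    rw [seriesD_eq] at h
    simp [unitSeries, Pop] at h
    exact h.symm
end

section
/- For a cochain complex V, the simplicial vector space Z^0Ω_•(V) of degree-0 cocycles of Ω_• ⊗ V is discrete (constant) if and only if V is concentrated in non-negative cohomological degrees, i.e., V = V^{≥0}. -/
open scoped BigOperators

variable (K : Type) [Field K]

variable {V : Type*} [AddCommGroup V] [Module K V]

/-! If `V` lives in degrees `≥ 0`, a degree-`0` element of `Ω_n ⊗ V` has no `dt`-components, as
their coefficients would sit in negative degrees. So it is a polynomial function with values in
`V⁰`, and closedness forces its partial derivatives, hence (in characteristic zero) all its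
non-constant coefficients, to vanish.

Conversely, for `x ∈ V^{-m-1}` the coboundary `d(t₁ dt₂ ⋯ dt_{m+1} ⊗ x)` is a degree-`0` cocycle
of `Ω_{m+1} ⊗ V` whose `dt₁ ⋯ dt_{m+1}`-coefficient is `x`; it is constant only if `x = 0`. -/

theorem Finsupp.add_single_one_eq_single_one_iff {ι : Type*} {β : ι →₀ ℕ} {i j : ι} :
    β + Finsupp.single j 1 = Finsupp.single i 1 ↔ β = 0 ∧ j = i := by
  refine ⟨fun h => ?_, fun ⟨hβ, hj⟩ => by rw [hβ, hj, zero_add]⟩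
  have hj : j = i := by
    by_contra hji
    simpa [Finsupp.single_apply, Ne.symm hji] using DFunLike.congr_fun h j
  subst hj
  exact ⟨add_eq_right.mp h, rfl⟩

section

variable {K}

theorem SeriesDeg.apply_eq_zero_of_lt {deg : ℤ → Submodule K V} {p : ℤ} {n : ℕ}
    {ξ : FormSeries V n} (hξ : SeriesDeg K deg p ξ) (hneg : ∀ i : ℤ, i < 0 → deg i = ⊥)
    {s : Finset (Fin n)} (hs : p < s.card) (β : Fin n →₀ ℕ) : ξ s β = 0 := by
  simpa [hneg _ (sub_neg.mpr hs)] using hξ s β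

variable (dV : V →ₗ[K] V) {n : ℕ}

theorem seriesD_apply (ξ : FormSeries V n) (s : Finset (Fin n)) (β : Fin n →₀ ℕ) :
    seriesD K dV ξ s β =
      ∑ j ∈ s, ((-1 : K) ^ (s.filter fun k => k < j).card) •
        ((β j + 1) • ξ (s.erase j) (β + Finsupp.single j 1)) +
      ((-1 : K) ^ s.card) • dV (ξ s β) :=
  congrArg (· + _) (Finset.sum_attach s fun j => ((-1 : K) ^ (s.filter fun k => k < j).card) •
    ((β j + 1) • ξ (s.erase j) (β + Finsupp.single j 1)))

theorem seriesD_singleton (ξ : FormSeries V n) (j : Fin n) (β : Fin n →₀ ℕ) :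
    seriesD K dV ξ {j} β = (β j + 1) • ξ ∅ (β + Finsupp.single j 1) - dV (ξ {j} β) := by
  simp [seriesD_apply, Finset.filter_singleton, sub_eq_add_neg]

theorem seriesD_empty (ξ : FormSeries V n) (β : Fin n →₀ ℕ) :
    seriesD K dV ξ ∅ β = dV (ξ ∅ β) := by
  simp [seriesD_apply]

section

variable {dV}

theorem apply_empty_eq_zero_of_seriesD_eq_zero [CharZero K] {ξ : FormSeries V n}
    (hD : seriesD K dV ξ = 0) (hξ : ∀ j β, ξ {j} β = 0) {γ : Fin n →₀ ℕ} (hγ : γ ≠ 0) :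
    ξ ∅ γ = 0 := by
  obtain ⟨j, hj⟩ := Finsupp.ne_iff.mp hγ
  set β := γ - Finsupp.single j 1
  have hγβ : β + Finsupp.single j 1 = γ :=
    tsub_add_cancel_of_le (Finsupp.single_le_iff.mpr (Nat.one_le_iff_ne_zero.mpr hj))
  have h := seriesD_singleton dV ξ j β
  rw [hD, hξ, map_zero, sub_zero, hγβ, ← Nat.cast_smul_eq_nsmul K] at h
  exact (smul_eq_zero.mp h.symm).resolve_left (Nat.cast_ne_zero.mpr (Nat.succ_ne_zero _))

theorem eq_unitSeries_of_seriesD_eq_zero [CharZero K] {ξ : FormSeries V n}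
    (hD : seriesD K dV ξ = 0) (hξ : ∀ s, s ≠ ∅ → ∀ β, ξ s β = 0) :
    dV (ξ ∅ 0) = 0 ∧ ξ = unitSeries n (ξ ∅ 0) := by
  refine ⟨by rw [← seriesD_empty, hD]; rfl, ?_⟩
  funext s β
  by_cases hs : s = ∅
  · subst hs
    by_cases hβ : β = 0
    · simp [unitSeries, hβ]
    · simp [unitSeries, hβ, apply_empty_eq_zero_of_seriesD_eq_zero hD
        (fun j => hξ {j} (Finset.singleton_ne_empty j)) hβ]
  · simp [unitSeries, hs, hξ s hs β]

end

/-- `d(t₁ dt₂ ⋯ dt_{m+1} ⊗ x) = dt₁ ⋯ dt_{m+1} ⊗ x + (-1)ᵐ t₁ dt₂ ⋯ dt_{m+1} ⊗ dx`. -/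
noncomputable def coboundarySeries (m : ℕ) (x : V) : FormSeries V (m + 1) := fun s β =>
  if s = Finset.univ ∧ β = 0 then x
  else if s = Finset.univ.erase 0 ∧ β = Finsupp.single 0 1 then ((-1 : K) ^ m) • dV x
  else 0

theorem coboundarySeries_erase_add_single {m : ℕ} (x : V) {s : Finset (Fin (m + 1))}
    {j : Fin (m + 1)} (hj : j ∈ s) (β : Fin (m + 1) →₀ ℕ) :
    coboundarySeries dV m x (s.erase j) (β + Finsupp.single j 1) =
      if s = Finset.univ ∧ β = 0 ∧ j = 0 then ((-1 : K) ^ m) • dV x else 0 := by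
  have hne : s.erase j ≠ Finset.univ := fun h => Finset.notMem_erase j s (h ▸ Finset.mem_univ j)
  have hiff : s.erase j = Finset.univ.erase 0 ∧ β + Finsupp.single j 1 = Finsupp.single 0 1 ↔
      s = Finset.univ ∧ β = 0 ∧ j = 0 := by
    rw [Finsupp.add_single_one_eq_single_one_iff]
    constructor
    · rintro ⟨hs, hβ, rfl⟩
      exact ⟨by rw [← Finset.insert_erase hj, hs, Finset.insert_erase (Finset.mem_univ _)], hβ, rfl⟩
    · rintro ⟨rfl, hβ, rfl⟩
      exact ⟨rfl, hβ, rfl⟩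
  simp only [coboundarySeries, hne, false_and, if_false, hiff]

theorem seriesD_coboundarySeries (hdd : ∀ x, dV (dV x) = 0) (m : ℕ) (x : V) :
    seriesD K dV (coboundarySeries dV m x) = 0 := by
  funext s β
  change seriesD K dV _ s β = 0
  rw [seriesD_apply]
  by_cases h : s = Finset.univ ∧ β = 0
  · obtain ⟨rfl, rfl⟩ := h
    rw [Finset.sum_eq_single_of_mem 0 (Finset.mem_univ 0) fun j _ hj => by
      rw [coboundarySeries_erase_add_single dV x (Finset.mem_univ j), if_neg (by tauto), smul_zero,
        smul_zero]]
    have hfilter : (Finset.univ.filter fun k : Fin (m + 1) => k < 0) = ∅ :=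
      Finset.filter_false_of_mem fun k _ => Fin.not_lt_zero k
    rw [coboundarySeries_erase_add_single dV x (Finset.mem_univ 0), if_pos ⟨rfl, rfl, rfl⟩, hfilter]
    simp [coboundarySeries, pow_succ]
  · have hdξ : dV (coboundarySeries dV m x s β) = 0 := by
      simp only [coboundarySeries, h, if_false]
      split_ifs <;> simp [hdd]
    rw [hdξ, smul_zero, add_zero]
    refine Finset.sum_eq_zero fun j hj => ?_
    rw [coboundarySeries_erase_add_single dV x hj, if_neg (by tauto), smul_zero, smul_zero]

theorem seriesPoly_coboundarySeries (m : ℕ) (x : V) : SeriesPoly (coboundarySeries dV m x) := by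
  intro s
  refine (Set.toFinite {0, Finsupp.single 0 1}).subset fun β hβ => ?_
  contrapose! hβ
  simp only [Set.mem_insert_iff, Set.mem_singleton_iff, not_or] at hβ
  simp [coboundarySeries, hβ]

theorem seriesDeg_coboundarySeries {deg : ℤ → Submodule K V} {m : ℕ} {x : V}
    (hx : x ∈ deg (-(m + 1))) (hdx : dV x ∈ deg (-m)) :
    SeriesDeg K deg 0 (coboundarySeries dV m x) := by
  intro s β
  simp only [coboundarySeries]
  split_ifs with h₁ h₂
  · simpa [h₁.1] using hx
  · have hcard : (Finset.univ.erase (0 : Fin (m + 1))).card = m := by simp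
    simpa [h₂.1, hcard] using Submodule.smul_mem _ _ hdx
  · exact zero_mem _

end

/-- Discreteness of `Z⁰Ω_•(V)` is encoded as: every degree-`0` cocycle of `Ω_n ⊗ V` is the
`n`-fold degeneracy `unitSeries n x` of a degree-`0` cocycle `x` of `V` (the degeneracies
`Z⁰V → Z⁰(Ω_n ⊗ V)` being injective, this says that they are all bijective). -/
theorem cocycle_space_discrete_iff_nonneg [CharZero K]
    (V : Type*) [AddCommGroup V] [Module K V]
    (deg : ℤ → Submodule K V) (dV : V →ₗ[K] V)
    (hdeg : ∀ (i : ℤ) (x : V), x ∈ deg i → dV x ∈ deg (i + 1))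
    (hdd : ∀ x : V, dV (dV x) = 0) :
    (∀ (n : ℕ) (ξ : FormSeries V n), SeriesPoly ξ → SeriesDeg K deg 0 ξ →
        seriesD K dV ξ = 0 →
        ∃ x : V, x ∈ deg 0 ∧ dV x = 0 ∧ ξ = unitSeries n x) ↔
      (∀ i : ℤ, i < 0 → deg i = ⊥) := by
  constructor
  · intro hdisc i hi
    rw [eq_bot_iff]
    intro x hx
    obtain ⟨m, rfl⟩ : ∃ m : ℕ, i = -(m + 1) := ⟨(-i - 1).toNat, by omega⟩
    have hdx : dV x ∈ deg (-m) := by simpa using hdeg _ x hx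
    obtain ⟨y, -, -, hy⟩ := hdisc (m + 1) (coboundarySeries dV m x)
      (seriesPoly_coboundarySeries dV m x) (seriesDeg_coboundarySeries dV hx hdx)
      (seriesD_coboundarySeries dV hdd m x)
    simpa [coboundarySeries, unitSeries, Finset.univ_nonempty.ne_empty] using congr_fun₂ hy Finset.univ 0
  · intro hneg n ξ _ hξ hD
    have hvanish : ∀ s, s ≠ ∅ → ∀ β, ξ s β = 0 := fun s hs =>
      hξ.apply_eq_zero_of_lt hneg (by simpa [Finset.card_pos, Finset.nonempty_iff_ne_empty])
    obtain ⟨hdξ, hunit⟩ := eq_unitSeries_of_seriesD_eq_zero hD hvanish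
    exact ⟨ξ ∅ 0, by simpa using hξ ∅ 0, hdξ, hunit⟩
end
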